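/- arXiv:2403.08729 — 6 statements merged into one kernel-verified Lean document; each statement's English description precedes it below -/
import Mathlib

section
/- Let H₀, H₁¹, …, H₁^Γ be Hermitian n×n complex matrices, let α ∈ ℝ and t ≥ 0, set H₁ = Σ_{γ=1}^Γ H₁^γ and H = H₀ + α·H₁, and define the first-order THRIFT approximant U_apx(t) = e^{−itH₀} · ∏_{γ=1}^{Γ} ( e^{itH₀} · e^{−it(H₀ + α·H₁^γ)} ), where the product over γ is ordered with the γ = 1 factor leftmost. Then ‖e^{−itH} − U_apx(t)‖ ≤ α² · ∫₀ᵗ dv ∫₀ᵛ ds Σ_{1 ≤ γ₁ < γ₂ ≤ Γ} ‖[H₁^{γ₁}(s), H₁^{γ₂}(v)]‖, where H₁^γ(s) := e^{isH₀} H₁^γ e^{−isH₀}. -/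
open scoped Matrix.Norms.L2Operator

noncomputable section

/-- The interaction-picture operator `A(s) = e^{isH₀} A e^{-isH₀}`. -/
def interactionPicture {n : ℕ} (H₀ A : Matrix (Fin n) (Fin n) ℂ) (s : ℝ) :
    Matrix (Fin n) (Fin n) ℂ :=
  NormedSpace.exp ((Complex.I * s) • H₀) * A * NormedSpace.exp ((-(Complex.I * s)) • H₀)

set_option maxHeartbeats 1000000
set_option synthInstance.maxHeartbeats 1000000
open NormedSpace Complex

abbrev Mat (n : ℕ) := Matrix (Fin n) (Fin n) ℂ
instance instNormedAlgebraRatMat (n : ℕ) : NormedAlgebra ℚ (Mat n) :=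
  NormedAlgebra.restrictScalars ℚ ℂ (Mat n)
variable {n : ℕ}

lemma expDeriv (M : Mat n) (c : ℂ) (v : ℝ) :
    HasDerivAt (fun u : ℝ => NormedSpace.exp ((c * u) • M)) ((c • M) * NormedSpace.exp ((c * v) • M)) v := by
  have h := hasDerivAt_exp_smul_const' (𝕂 := ℝ) (c • M) v
  have e : ∀ u : ℝ, u • (c • M) = (c * u) • M := fun u => by
    rw [← Complex.coe_smul, smul_smul, mul_comm]
  simpa [e] using h

lemma contExp (M : Mat n) (c : ℂ) : Continuous fun v : ℝ => NormedSpace.exp ((c * v) • M) :=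
  NormedSpace.exp_continuous.comp ((continuous_const.mul Complex.continuous_ofReal).smul
    continuous_const)

lemma expUnit (M : Mat n) (hM : M.IsHermitian) (c : ℂ) (hc : starRingEnd ℂ c = -c) :
    NormedSpace.exp (c • M) ∈ unitary (Mat n) := by
  apply NormedSpace.exp_mem_unitary_of_mem_skewAdjoint
  rw [skewAdjoint.mem_iff, star_smul, Matrix.star_eq_conjTranspose, hM.eq, ← neg_smul]
  rw [RCLike.star_def, hc]

lemma norm_unit_mul {u : Mat n} (hu : u ∈ unitary (Mat n)) (x : Mat n) : ‖u * x‖ = ‖x‖ := by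
  have h1 : star (u * x) * (u * x) = star x * x := by
    rw [star_mul, mul_assoc, ← mul_assoc (star u), Unitary.mem_iff.mp hu |>.1, one_mul]
  have := CStarRing.norm_star_mul_self (x := u * x)
  rw [h1, CStarRing.norm_star_mul_self] at this
  exact (mul_self_inj (norm_nonneg _) (norm_nonneg _)).mp this.symm

lemma norm_mul_unit {u : Mat n} (hu : u ∈ unitary (Mat n)) (x : Mat n) : ‖x * u‖ = ‖x‖ := by
  have h1 : (x * u) * star (x * u) = x * star x := by
    rw [star_mul, mul_assoc, ← mul_assoc u, Unitary.mem_iff.mp hu |>.2, one_mul]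
  have := CStarRing.norm_self_mul_star (x := x * u)
  rw [h1, CStarRing.norm_self_mul_star] at this
  exact (mul_self_inj (norm_nonneg _) (norm_nonneg _)).mp this.symm

lemma comm_prod_bound (A : Mat n) (L : List (Mat n)) (hL : ∀ x ∈ L, x ∈ unitary (Mat n)) :
    ‖A * L.prod - L.prod * A‖ ≤ (L.map fun x => ‖A * x - x * A‖).sum := by
  induction L with
  | nil => simp
  | cons x R ih =>
    have hx := hL x (by simp)
    have hR : ∀ y ∈ R, y ∈ unitary (Mat n) := fun y hy => hL y (by simp [hy])
    have hRu : R.prod ∈ unitary (Mat n) := Submonoid.list_prod_mem _ hR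
    have split : A * (x :: R).prod - (x :: R).prod * A
        = (A * x - x * A) * R.prod + x * (A * R.prod - R.prod * A) := by
      simp only [List.prod_cons]; noncomm_ring
    rw [split, List.map_cons, List.sum_cons]
    calc ‖(A * x - x * A) * R.prod + x * (A * R.prod - R.prod * A)‖
        ≤ ‖(A * x - x * A) * R.prod‖ + ‖x * (A * R.prod - R.prod * A)‖ := norm_add_le _ _
      _ = ‖A * x - x * A‖ + ‖A * R.prod - R.prod * A‖ := by
          rw [norm_mul_unit hRu, norm_unit_mul hx]
      _ ≤ ‖A * x - x * A‖ + (R.map fun x => ‖A * x - x * A‖).sum := by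
          linarith [ih hR]

/-- interactionPicture copy -/
def ip (H₀ A : Mat n) (s : ℝ) : Mat n :=
  NormedSpace.exp ((Complex.I * s) • H₀) * A * NormedSpace.exp ((-(Complex.I * s)) • H₀)

def Fpr (H₀ K : Mat n) (v : ℝ) : Mat n :=
  NormedSpace.exp ((Complex.I * v) • H₀) * NormedSpace.exp ((-(Complex.I * v)) • (H₀ + K))

def Fiv (H₀ K : Mat n) (v : ℝ) : Mat n :=
  NormedSpace.exp ((Complex.I * v) • (H₀ + K)) * NormedSpace.exp ((-(Complex.I * v)) • H₀)

lemma exp_smul_mul (M : Mat n) (c d : ℂ) :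
    NormedSpace.exp (c • M) * NormedSpace.exp (d • M) = NormedSpace.exp ((c + d) • M) := by
  rw [add_smul, exp_add_of_commute (((Commute.refl M).smul_left c).smul_right d)]

lemma exp_neg_mul_self (M : Mat n) (c : ℂ) : NormedSpace.exp ((-c) • M) * NormedSpace.exp (c • M) = 1 := by
  rw [exp_smul_mul, neg_add_cancel, zero_smul, NormedSpace.exp_zero]

lemma exp_self_mul_neg (M : Mat n) (c : ℂ) : NormedSpace.exp (c • M) * NormedSpace.exp ((-c) • M) = 1 := by
  rw [exp_smul_mul, add_neg_cancel, zero_smul, NormedSpace.exp_zero]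

lemma contExp' (M : Mat n) (c : ℂ) : Continuous fun v : ℝ => NormedSpace.exp ((-(c * v)) • M) := by
  simpa [neg_mul] using contExp M (-c)

lemma ip_cont (H₀ A : Mat n) : Continuous fun s => ip H₀ A s :=
  ((contExp H₀ Complex.I).mul continuous_const).mul (contExp' H₀ Complex.I)

lemma Fpr_cont (H₀ K : Mat n) : Continuous (Fpr H₀ K) :=
  (contExp H₀ Complex.I).mul (contExp' (H₀ + K) Complex.I)

lemma Fiv_cont (H₀ K : Mat n) : Continuous (Fiv H₀ K) :=
  (contExp (H₀ + K) Complex.I).mul (contExp' H₀ Complex.I)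

lemma conj_I_mul (v : ℝ) : (starRingEnd ℂ) (Complex.I * v) = -(Complex.I * v) := by
  simp [Complex.conj_ofReal]

lemma conj_neg_I_mul (v : ℝ) : (starRingEnd ℂ) (-(Complex.I * v)) = -(-(Complex.I * v)) := by
  simp [Complex.conj_ofReal]

lemma expUnit' (M : Mat n) (hM : M.IsHermitian) (v : ℝ) :
    NormedSpace.exp ((Complex.I * v) • M) ∈ unitary (Mat n) :=
  expUnit M hM _ (conj_I_mul v)

lemma expUnit'' (M : Mat n) (hM : M.IsHermitian) (v : ℝ) :
    NormedSpace.exp ((-(Complex.I * v)) • M) ∈ unitary (Mat n) :=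
  expUnit M hM _ (conj_neg_I_mul v)

lemma Fpr_unit (H₀ K : Mat n) (hH₀ : H₀.IsHermitian) (hK : (H₀ + K).IsHermitian) (v : ℝ) :
    Fpr H₀ K v ∈ unitary (Mat n) :=
  mul_mem (expUnit' H₀ hH₀ v) (expUnit'' _ hK v)

lemma Fiv_unit (H₀ K : Mat n) (hH₀ : H₀.IsHermitian) (hK : (H₀ + K).IsHermitian) (v : ℝ) :
    Fiv H₀ K v ∈ unitary (Mat n) :=
  mul_mem (expUnit' _ hK v) (expUnit'' H₀ hH₀ v)

lemma Fiv_mul_Fpr (H₀ K : Mat n) (v : ℝ) : Fiv H₀ K v * Fpr H₀ K v = 1 := by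
  unfold Fiv Fpr
  rw [mul_assoc, ← mul_assoc (NormedSpace.exp ((-(Complex.I * ↑v)) • H₀)), exp_neg_mul_self, one_mul,
    exp_self_mul_neg]

lemma Fpr_mul_Fiv (H₀ K : Mat n) (v : ℝ) : Fpr H₀ K v * Fiv H₀ K v = 1 := by
  unfold Fiv Fpr
  rw [mul_assoc, ← mul_assoc (NormedSpace.exp ((-(Complex.I * ↑v)) • (H₀ + K))), exp_neg_mul_self, one_mul,
    exp_self_mul_neg]

lemma Fpr_zero (H₀ K : Mat n) : Fpr H₀ K 0 = 1 := by
  unfold Fpr; norm_num [NormedSpace.exp_zero]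

lemma Fiv_zero (H₀ K : Mat n) : Fiv H₀ K 0 = 1 := by
  unfold Fiv; norm_num [NormedSpace.exp_zero]

lemma expDerivNeg (M : Mat n) (c : ℂ) (v : ℝ) :
    HasDerivAt (fun u : ℝ => NormedSpace.exp ((-(c * u)) • M)) (((-c) • M) * NormedSpace.exp ((-(c * v)) • M)) v := by
  simpa [neg_mul] using expDeriv M (-c) v

lemma exp_neg_cancel (x X : Mat n) : NormedSpace.exp (-x) * (NormedSpace.exp x * X) = X := by
  rw [← mul_assoc, ← exp_add_of_commute (Commute.refl x).neg_left, neg_add_cancel,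
    NormedSpace.exp_zero, one_mul]

lemma exp_pos_cancel (x X : Mat n) : NormedSpace.exp x * (NormedSpace.exp (-x) * X) = X := by
  rw [← mul_assoc, ← exp_add_of_commute (Commute.refl x).neg_right, add_neg_cancel,
    NormedSpace.exp_zero, one_mul]

lemma comm_exp (M : Mat n) (c : ℂ) : M * NormedSpace.exp (c • M) = NormedSpace.exp (c • M) * M :=
  (((Commute.refl M).smul_right c).exp_right).eq

lemma Fpr_deriv (H₀ K : Mat n) (v : ℝ) :
    HasDerivAt (Fpr H₀ K) ((-Complex.I) • (ip H₀ K v * Fpr H₀ K v)) v := by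
  have h := (expDeriv H₀ Complex.I v).mul (expDerivNeg (H₀ + K) Complex.I v)
  refine h.congr_deriv (Eq.symm ?_)
  unfold ip Fpr
  rw [smul_mul_assoc, comm_exp]
  simp only [smul_mul_assoc, mul_smul_comm, mul_assoc, add_mul, mul_add, neg_smul, neg_mul, mul_neg, smul_add]
  rw [exp_neg_cancel]
  module

lemma Fiv_deriv (H₀ K : Mat n) (v : ℝ) :
    HasDerivAt (Fiv H₀ K) (Complex.I • (Fiv H₀ K v * ip H₀ K v)) v := by
  have h := (expDeriv (H₀ + K) Complex.I v).mul (expDerivNeg H₀ Complex.I v)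
  refine h.congr_deriv (Eq.symm ?_)
  unfold ip Fiv
  rw [smul_mul_assoc, comm_exp]
  simp only [smul_mul_assoc, mul_smul_comm, mul_assoc, add_mul, mul_add, neg_smul, neg_mul, mul_neg, smul_add]
  rw [exp_neg_cancel]
  module

lemma norm_sub_le_integral_deriv (f f' : ℝ → Mat n) (hf : ∀ x, HasDerivAt f (f' x) x)
    (hc : Continuous f') {v : ℝ} (hv : 0 ≤ v) (g : ℝ → ℝ) (hg : Continuous g)
    (hb : ∀ s ∈ Set.Icc 0 v, ‖f' s‖ ≤ g s) : ‖f v - f 0‖ ≤ ∫ s in (0:ℝ)..v, g s := by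
  have h0 : (∫ s in (0:ℝ)..v, f' s) = f v - f 0 :=
    intervalIntegral.integral_eq_sub_of_hasDerivAt (fun x _ => hf x)
      (hc.intervalIntegrable _ _)
  rw [← h0]
  have hae : ∀ᵐ s ∂(MeasureTheory.volume.restrict (Set.uIoc (0:ℝ) v)), ‖f' s‖ ≤ g s := by
    refine (MeasureTheory.ae_restrict_mem measurableSet_uIoc).mono fun s hs => ?_
    rw [Set.uIoc_of_le hv] at hs
    exact hb s (Set.Ioc_subset_Icc_self hs)
  have h2 := intervalIntegral.norm_integral_le_abs_of_norm_le (μ := MeasureTheory.volume)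
    (a := (0:ℝ)) (b := v) (f := f') (g := g) hae (hg.intervalIntegrable _ _)
  rwa [_root_.abs_of_nonneg (intervalIntegral.integral_nonneg hv fun u hu =>
    le_trans (norm_nonneg (f' u)) (hb u hu))] at h2

lemma comm_F_bound (H₀ K : Mat n) (hH₀ : H₀.IsHermitian) (hK : (H₀ + K).IsHermitian)
    (A : Mat n) {v : ℝ} (hv : 0 ≤ v) :
    ‖A * Fpr H₀ K v - Fpr H₀ K v * A‖ ≤
      ∫ s in (0:ℝ)..v, ‖ip H₀ K s * A - A * ip H₀ K s‖ := by
  set h : ℝ → Mat n := fun s => Fiv H₀ K s * A * Fpr H₀ K s with hh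
  set h' : ℝ → Mat n := fun s =>
    Complex.I • (Fiv H₀ K s * ((ip H₀ K s * A - A * ip H₀ K s) * Fpr H₀ K s)) with hh'
  have hder : ∀ s, HasDerivAt h (h' s) s := by
    intro s
    have hd := ((Fiv_deriv H₀ K s).mul (hasDerivAt_const s A)).mul (Fpr_deriv H₀ K s)
    refine hd.congr_deriv (Eq.symm ?_)
    simp only [hh', Pi.mul_apply, mul_zero, add_zero, zero_mul, smul_mul_assoc, mul_smul_comm, mul_assoc,
      sub_mul, mul_sub, neg_smul, neg_mul, mul_neg, smul_sub, zero_add]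
    module
  have hcont : Continuous h' :=
    (((Fiv_cont H₀ K).mul ((((ip_cont H₀ K).mul (continuous_const (y := A))).sub
      ((continuous_const (y := A)).mul (ip_cont H₀ K))).mul (Fpr_cont H₀ K)))).const_smul Complex.I
  have hnorm : ∀ s, ‖h' s‖ = ‖ip H₀ K s * A - A * ip H₀ K s‖ := by
    intro s
    rw [hh', norm_smul, Complex.norm_I, one_mul, norm_unit_mul (Fiv_unit H₀ K hH₀ hK s),
      norm_mul_unit (Fpr_unit H₀ K hH₀ hK s)]
  have key : ‖h v - h 0‖ ≤ ∫ s in (0:ℝ)..v, ‖ip H₀ K s * A - A * ip H₀ K s‖ :=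
    norm_sub_le_integral_deriv h h' hder hcont hv _
      ((((ip_cont H₀ K).mul continuous_const).sub
        (continuous_const.mul (ip_cont H₀ K))).norm)
      (fun s _ => le_of_eq (hnorm s))
  have h0A : h 0 = A := by simp [hh, Fiv_zero, Fpr_zero]
  have hfin : A * Fpr H₀ K v - Fpr H₀ K v * A = Fpr H₀ K v * (h v - h 0) := by
    rw [h0A, hh, mul_sub]
    simp only [← mul_assoc, Fpr_mul_Fiv, one_mul]
  rw [hfin, norm_unit_mul (Fpr_unit H₀ K hH₀ hK v)]
  exact key
lemma prod_ofFn_deriv {Γ : ℕ} (F F' : Fin Γ → ℝ → Mat n)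
    (hF : ∀ γ v, HasDerivAt (F γ) (F' γ v) v) (v : ℝ) :
    HasDerivAt (fun u => (List.ofFn fun γ => F γ u).prod)
      (∑ i : Fin Γ, (((List.finRange Γ).take i).map fun γ => F γ v).prod * F' i v *
        (((List.finRange Γ).drop (i + 1)).map fun γ => F γ v).prod) v := by
  have hg := hasFDerivAt_list_prod_finRange' (𝕜 := ℝ) (n := Γ) (x := fun γ => F γ v)
  have hc : HasDerivAt (fun u => fun γ => F γ u) (fun γ => F' γ v) v :=
    hasDerivAt_pi.mpr fun γ => hF γ v
  have h := hg.comp_hasDerivAt v hc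
  simp only [List.ofFn_eq_map]
  refine h.congr_deriv (Eq.symm ?_)
  simp [ContinuousLinearMap.sum_apply, ContinuousLinearMap.smul_apply,
    ContinuousLinearMap.smulRight_apply, ContinuousLinearMap.proj_apply, smul_eq_mul,
    Nat.succ_eq_add_one, mul_assoc]

lemma prod_take_drop {Γ : ℕ} {M : Type*} [Monoid M] (x : Fin Γ → M) (i : Fin Γ) :
    ((List.finRange Γ).map x).prod =
      (((List.finRange Γ).take i).map x).prod * x i *
        (((List.finRange Γ).drop (i + 1)).map x).prod := by
  have hi : (i : ℕ) < (List.finRange Γ).length := by simp [i.isLt]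
  conv_lhs => rw [← List.take_append_drop (i : ℕ) (List.finRange Γ)]
  rw [List.map_append, List.prod_append, List.drop_eq_getElem_cons hi, List.map_cons,
    List.prod_cons, List.getElem_finRange, mul_assoc]
  simp

lemma mem_take_finRange {Γ : ℕ} (i : Fin Γ) (β : Fin Γ) :
    β ∈ (List.finRange Γ).take i ↔ β < i := by
  rw [List.mem_take_iff_getElem]
  constructor
  · rintro ⟨j, hj, rfl⟩
    simp only [List.getElem_finRange]
    rw [lt_min_iff] at hj
    exact Fin.mk_lt_of_lt_val hj.1
  · intro hβ
    refine ⟨β, ?_, ?_⟩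
    · simp [lt_min_iff, hβ, β.isLt, Fin.lt_iff_val_lt_val.mp hβ]
    · simp [List.getElem_finRange]

lemma sum_take_finRange {Γ : ℕ} (g : Fin Γ → ℝ) (i : Fin Γ) :
    (((List.finRange Γ).take i).map g).sum = ∑ β ∈ Finset.univ.filter (· < i), g β := by
  have hnd : ((List.finRange Γ).take i).Nodup :=
    List.Nodup.sublist (List.take_sublist _ _) (List.nodup_finRange Γ)
  rw [← List.sum_toFinset _ hnd]
  apply Finset.sum_congr
  · ext β
    simp [List.mem_toFinset, mem_take_finRange]
  · intros; rfl

lemma pair_sum {Γ : ℕ} (f : Fin Γ × Fin Γ → ℝ) :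
    ∑ p ∈ Finset.univ.filter (fun p : Fin Γ × Fin Γ => p.1 < p.2), f p
      = ∑ γ : Fin Γ, ∑ β ∈ Finset.univ.filter (· < γ), f (β, γ) := by
  rw [Finset.sum_filter, Fintype.sum_prod_type_right]
  exact Finset.sum_congr rfl fun γ _ => (Finset.sum_filter _ _).symm

lemma herm_smul (a : ℝ) {M : Mat n} (h : M.IsHermitian) : (a • M).IsHermitian := by
  ext i j
  simp only [Matrix.conjTranspose_apply, Matrix.smul_apply, star_smul, star_trivial]
  rw [h.apply]

lemma herm_sum {Γ : ℕ} (M : Fin Γ → Mat n) (h : ∀ γ, (M γ).IsHermitian) :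
    (∑ γ, M γ).IsHermitian := by
  unfold Matrix.IsHermitian
  rw [Matrix.conjTranspose_sum]
  exact Finset.sum_congr rfl fun γ _ => h γ

lemma ip_smul (H₀ A : Mat n) (a : ℝ) (s : ℝ) : ip H₀ (a • A) s = a • ip H₀ A s := by
  unfold ip
  rw [mul_smul_comm, smul_mul_assoc]

lemma ip_sum {Γ : ℕ} (H₀ : Mat n) (M : Fin Γ → Mat n) (s : ℝ) :
    ip H₀ (∑ γ, M γ) s = ∑ γ, ip H₀ (M γ) s := by
  unfold ip
  rw [Finset.mul_sum, Finset.sum_mul]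

lemma cont_list_prod_F {Γ : ℕ} (F : Fin Γ → ℝ → Mat n) (hF : ∀ γ, Continuous (F γ))
    (ll : List (Fin Γ)) : Continuous fun v => (ll.map fun γ => F γ v).prod := by
  induction ll with
  | nil => simpa using continuous_const
  | cons a l ih => simp only [List.map_cons, List.prod_cons]; exact (hF a).mul ih

section main
variable {Γ : ℕ} (H₀ : Mat n) (H₁ : Fin Γ → Mat n) (α : ℝ)

def FF (γ : Fin Γ) (v : ℝ) : Mat n := Fpr H₀ (α • H₁ γ) v
def WW (v : ℝ) : Mat n := (List.ofFn fun γ => FF H₀ H₁ α γ v).prod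
def PP (i : Fin Γ) (v : ℝ) : Mat n :=
  (((List.finRange Γ).take i).map fun γ => FF H₀ H₁ α γ v).prod
def SS (i : Fin Γ) (v : ℝ) : Mat n :=
  (((List.finRange Γ).drop (i + 1)).map fun γ => FF H₀ H₁ α γ v).prod
def DD (v : ℝ) : Mat n := Fiv H₀ (α • ∑ γ, H₁ γ) v * WW H₀ H₁ α v
def DD' (v : ℝ) : Mat n :=
  Complex.I • (Fiv H₀ (α • ∑ γ, H₁ γ) v * ip H₀ (α • ∑ γ, H₁ γ) v) * WW H₀ H₁ α v +
    Fiv H₀ (α • ∑ γ, H₁ γ) v *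
      ∑ i, PP H₀ H₁ α i v * ((-Complex.I) • (ip H₀ (α • H₁ i) v * FF H₀ H₁ α i v)) *
        SS H₀ H₁ α i v
def cc (β γ : Fin Γ) (s v : ℝ) : ℝ :=
  ‖ip H₀ (H₁ β) s * ip H₀ (H₁ γ) v - ip H₀ (H₁ γ) v * ip H₀ (H₁ β) s‖
def gg (v : ℝ) : ℝ :=
  α ^ 2 * ∫ s in (0:ℝ)..v,
    ∑ p ∈ Finset.univ.filter (fun p : Fin Γ × Fin Γ => p.1 < p.2), cc H₀ H₁ p.1 p.2 s v

lemma WW_deriv (v : ℝ) : HasDerivAt (WW H₀ H₁ α)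
    (∑ i, PP H₀ H₁ α i v * ((-Complex.I) • (ip H₀ (α • H₁ i) v * FF H₀ H₁ α i v)) *
      SS H₀ H₁ α i v) v := by
  have h := prod_ofFn_deriv (fun γ => FF H₀ H₁ α γ)
    (fun γ v => (-Complex.I) • (ip H₀ (α • H₁ γ) v * FF H₀ H₁ α γ v))
    (fun γ v => Fpr_deriv H₀ (α • H₁ γ) v) v
  exact h

lemma DD_deriv (v : ℝ) : HasDerivAt (DD H₀ H₁ α) (DD' H₀ H₁ α v) v :=
  (Fiv_deriv H₀ (α • ∑ γ, H₁ γ) v).mul (WW_deriv H₀ H₁ α v)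

lemma FF_cont (γ : Fin Γ) : Continuous (FF H₀ H₁ α γ) := Fpr_cont _ _
lemma WW_cont : Continuous (WW H₀ H₁ α) := by
  have := cont_list_prod_F (fun γ => FF H₀ H₁ α γ) (fun γ => FF_cont H₀ H₁ α γ)
    (List.finRange Γ)
  unfold WW
  simp only [List.ofFn_eq_map]
  exact this
lemma PP_cont (i : Fin Γ) : Continuous (PP H₀ H₁ α i) :=
  cont_list_prod_F _ (fun γ => FF_cont H₀ H₁ α γ) _
lemma SS_cont (i : Fin Γ) : Continuous (SS H₀ H₁ α i) :=
  cont_list_prod_F _ (fun γ => FF_cont H₀ H₁ α γ) _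

variable (hH₀ : H₀.IsHermitian) (hH₁ : ∀ γ, (H₁ γ).IsHermitian)
include hH₀ hH₁

lemma FF_unit (γ : Fin Γ) (v : ℝ) : FF H₀ H₁ α γ v ∈ unitary (Mat n) :=
  Fpr_unit _ _ hH₀ (hH₀.add (herm_smul α (hH₁ γ))) v
lemma PP_unit (i : Fin Γ) (v : ℝ) : PP H₀ H₁ α i v ∈ unitary (Mat n) := by
  refine Submonoid.list_prod_mem _ fun x hx => ?_
  obtain ⟨γ, -, rfl⟩ := List.mem_map.mp hx
  exact FF_unit H₀ H₁ α hH₀ hH₁ γ v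
lemma SS_unit (i : Fin Γ) (v : ℝ) : SS H₀ H₁ α i v ∈ unitary (Mat n) := by
  refine Submonoid.list_prod_mem _ fun x hx => ?_
  obtain ⟨γ, -, rfl⟩ := List.mem_map.mp hx
  exact FF_unit H₀ H₁ α hH₀ hH₁ γ v

omit hH₀ hH₁

lemma WW_split (i : Fin Γ) (v : ℝ) :
    WW H₀ H₁ α v = PP H₀ H₁ α i v * (FF H₀ H₁ α i v * SS H₀ H₁ α i v) := by
  rw [WW, List.ofFn_eq_map, prod_take_drop (fun γ => FF H₀ H₁ α γ v) i, mul_assoc]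
  rfl

lemma DD_zero : DD H₀ H₁ α 0 = 1 := by
  rw [DD, Fiv_zero, one_mul, WW]
  simp [FF, Fpr_zero]

lemma cc_cont_s (β γ : Fin Γ) (v : ℝ) : Continuous fun s => cc H₀ H₁ β γ s v :=
  (((ip_cont H₀ (H₁ β)).mul continuous_const).sub
    (continuous_const.mul (ip_cont H₀ (H₁ β)))).norm

lemma DD'_bound (hH₀ : H₀.IsHermitian) (hH₁ : ∀ γ, (H₁ γ).IsHermitian) {v : ℝ} (hv : 0 ≤ v) :
    ‖DD' H₀ H₁ α v‖ ≤ gg H₀ H₁ α v := by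
  have hKtherm : (H₀ + α • ∑ γ, H₁ γ).IsHermitian := hH₀.add (herm_smul α (herm_sum H₁ hH₁))
  have hKherm : ∀ γ : Fin Γ, (H₀ + α • H₁ γ).IsHermitian :=
    fun γ => hH₀.add (herm_smul α (hH₁ γ))
  set X : Mat n := Complex.I • (ip H₀ (α • ∑ γ, H₁ γ) v * WW H₀ H₁ α v) +
    ∑ i, PP H₀ H₁ α i v * ((-Complex.I) • (ip H₀ (α • H₁ i) v * FF H₀ H₁ α i v)) *
      SS H₀ H₁ α i v with hXdef
  have h1 : DD' H₀ H₁ α v = Fiv H₀ (α • ∑ γ, H₁ γ) v * X := by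
    rw [DD', hXdef, mul_add]
    congr 1
    rw [smul_mul_assoc, mul_smul_comm, mul_assoc]
  rw [h1, norm_unit_mul (Fiv_unit _ _ hH₀ hKtherm v)]
  have h2 : X = ∑ i, Complex.I • ((ip H₀ (α • H₁ i) v * PP H₀ H₁ α i v -
      PP H₀ H₁ α i v * ip H₀ (α • H₁ i) v) * (FF H₀ H₁ α i v * SS H₀ H₁ α i v)) := by
    rw [hXdef]
    have hsum : ip H₀ (α • ∑ γ, H₁ γ) v = ∑ i, ip H₀ (α • H₁ i) v := by
      rw [Finset.smul_sum, ip_sum]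
    rw [hsum, Finset.sum_mul, Finset.smul_sum, ← Finset.sum_add_distrib]
    refine Finset.sum_congr rfl fun i _ => ?_
    rw [WW_split H₀ H₁ α i v]
    simp only [smul_mul_assoc, mul_smul_comm, mul_assoc, sub_mul, mul_sub, neg_smul, neg_mul,
      mul_neg, smul_sub]
    module
  rw [h2]
  refine le_trans (norm_sum_le _ _) ?_
  have hinteg : ∀ (β γ : Fin Γ), IntervalIntegrable (fun s => cc H₀ H₁ β γ s v)
      MeasureTheory.volume 0 v := fun β γ => (cc_cont_s H₀ H₁ β γ v).intervalIntegrable _ _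
  have key : ∀ i : Fin Γ,
      ‖Complex.I • ((ip H₀ (α • H₁ i) v * PP H₀ H₁ α i v -
        PP H₀ H₁ α i v * ip H₀ (α • H₁ i) v) * (FF H₀ H₁ α i v * SS H₀ H₁ α i v))‖ ≤
      ∑ β ∈ Finset.univ.filter (· < i), α ^ 2 * ∫ s in (0:ℝ)..v, cc H₀ H₁ β i s v := by
    intro i
    set A : Mat n := ip H₀ (α • H₁ i) v with hA
    calc ‖Complex.I • ((A * PP H₀ H₁ α i v - PP H₀ H₁ α i v * A) *
            (FF H₀ H₁ α i v * SS H₀ H₁ α i v))‖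
        = ‖A * PP H₀ H₁ α i v - PP H₀ H₁ α i v * A‖ := by
          rw [norm_smul, Complex.norm_I, one_mul, norm_mul_unit
            (mul_mem (FF_unit H₀ H₁ α hH₀ hH₁ i v) (SS_unit H₀ H₁ α hH₀ hH₁ i v))]
      _ ≤ ((((List.finRange Γ).take i).map fun γ => FF H₀ H₁ α γ v).map
            fun x => ‖A * x - x * A‖).sum := by
          apply comm_prod_bound
          intro x hx
          obtain ⟨γ, -, rfl⟩ := List.mem_map.mp hx
          exact FF_unit H₀ H₁ α hH₀ hH₁ γ v
      _ = (((List.finRange Γ).take i).map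
            fun β => ‖A * FF H₀ H₁ α β v - FF H₀ H₁ α β v * A‖).sum := by
          rw [List.map_map]; rfl
      _ ≤ (((List.finRange Γ).take i).map
            fun β => α ^ 2 * ∫ s in (0:ℝ)..v, cc H₀ H₁ β i s v).sum := by
          apply List.sum_le_sum
          intro β hβ
          have hstep := comm_F_bound H₀ (α • H₁ β) hH₀ (hKherm β) A hv
          refine le_trans hstep (le_of_eq ?_)
          rw [← intervalIntegral.integral_const_mul]
          apply intervalIntegral.integral_congr
          intro s hs
          simp only [hA, ip_smul]
          simp only [smul_mul_assoc, mul_smul_comm, smul_smul, ← smul_sub]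
          rw [norm_smul, Real.norm_eq_abs, abs_mul_self, ← pow_two, cc]
      _ = ∑ β ∈ Finset.univ.filter (· < i), α ^ 2 * ∫ s in (0:ℝ)..v, cc H₀ H₁ β i s v :=
          sum_take_finRange _ i
  calc (∑ i, ‖Complex.I • ((ip H₀ (α • H₁ i) v * PP H₀ H₁ α i v -
          PP H₀ H₁ α i v * ip H₀ (α • H₁ i) v) * (FF H₀ H₁ α i v * SS H₀ H₁ α i v))‖)
      ≤ ∑ i, ∑ β ∈ Finset.univ.filter (· < i), α ^ 2 * ∫ s in (0:ℝ)..v, cc H₀ H₁ β i s v :=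
        Finset.sum_le_sum fun i _ => key i
    _ = α ^ 2 * ∑ i, ∑ β ∈ Finset.univ.filter (· < i), ∫ s in (0:ℝ)..v, cc H₀ H₁ β i s v := by
        rw [Finset.mul_sum]
        exact Finset.sum_congr rfl fun i _ => (Finset.mul_sum _ _ _).symm
    _ = α ^ 2 * ∑ p ∈ Finset.univ.filter (fun p : Fin Γ × Fin Γ => p.1 < p.2),
          ∫ s in (0:ℝ)..v, cc H₀ H₁ p.1 p.2 s v := by
        rw [pair_sum]
    _ = gg H₀ H₁ α v := by
        have hswap : (∫ s in (0:ℝ)..v, ∑ p ∈ Finset.univ.filter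
              (fun p : Fin Γ × Fin Γ => p.1 < p.2), cc H₀ H₁ p.1 p.2 s v)
            = ∑ p ∈ Finset.univ.filter (fun p : Fin Γ × Fin Γ => p.1 < p.2),
              ∫ s in (0:ℝ)..v, cc H₀ H₁ p.1 p.2 s v :=
          intervalIntegral.integral_finset_sum fun p _ => hinteg p.1 p.2
        rw [gg, hswap]

lemma gg_cont : Continuous (gg H₀ H₁ α) := by
  have hΦ : Continuous fun q : ℝ × ℝ =>
      ∑ p ∈ Finset.univ.filter (fun p : Fin Γ × Fin Γ => p.1 < p.2),
        cc H₀ H₁ p.1 p.2 q.2 q.1 := by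
    refine continuous_finset_sum _ fun p _ => ?_
    exact ((((ip_cont H₀ (H₁ p.1)).comp continuous_snd).mul
      ((ip_cont H₀ (H₁ p.2)).comp continuous_fst)).sub
      (((ip_cont H₀ (H₁ p.2)).comp continuous_fst).mul
      ((ip_cont H₀ (H₁ p.1)).comp continuous_snd))).norm
  have h := intervalIntegral.continuous_parametric_intervalIntegral_of_continuous
    (μ := MeasureTheory.volume) (a₀ := (0:ℝ))
    (f := fun (v : ℝ) (s : ℝ) => ∑ p ∈ Finset.univ.filter
      (fun p : Fin Γ × Fin Γ => p.1 < p.2), cc H₀ H₁ p.1 p.2 s v)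
    (by exact hΦ) continuous_id
  exact continuous_const.mul h

lemma DD'_cont : Continuous (DD' H₀ H₁ α) := by
  refine Continuous.add ?_ ?_
  · exact ((((Fiv_cont H₀ _).mul (ip_cont H₀ _)).const_smul Complex.I).mul (WW_cont H₀ H₁ α))
  · refine (Fiv_cont H₀ _).mul (continuous_finset_sum _ fun i _ => ?_)
    exact ((PP_cont H₀ H₁ α i).mul
      (((ip_cont H₀ _).mul (FF_cont H₀ H₁ α i)).const_smul (-Complex.I))).mul
      (SS_cont H₀ H₁ α i)

lemma thrift_aux (hH₀ : H₀.IsHermitian) (hH₁ : ∀ γ, (H₁ γ).IsHermitian)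
    (t : ℝ) (ht : 0 ≤ t) :
    ‖NormedSpace.exp ((-(Complex.I * t)) • (H₀ + α • ∑ γ, H₁ γ)) -
      NormedSpace.exp ((-(Complex.I * t)) • H₀) * WW H₀ H₁ α t‖ ≤ ∫ v in (0:ℝ)..t, gg H₀ H₁ α v := by
  have hKtherm : (H₀ + α • ∑ γ, H₁ γ).IsHermitian := hH₀.add (herm_smul α (herm_sum H₁ hH₁))
  have heq : NormedSpace.exp ((-(Complex.I * t)) • (H₀ + α • ∑ γ, H₁ γ)) * (1 - DD H₀ H₁ α t) =
      NormedSpace.exp ((-(Complex.I * t)) • (H₀ + α • ∑ γ, H₁ γ)) -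
        NormedSpace.exp ((-(Complex.I * t)) • H₀) * WW H₀ H₁ α t := by
    rw [mul_sub, mul_one, DD]
    unfold Fiv
    rw [← mul_assoc, ← mul_assoc, exp_neg_mul_self, one_mul]
  rw [← heq, norm_unit_mul (expUnit'' _ hKtherm t)]
  have h1D : ‖(1 : Mat n) - DD H₀ H₁ α t‖ = ‖DD H₀ H₁ α t - DD H₀ H₁ α 0‖ := by
    rw [DD_zero, norm_sub_rev]
  rw [h1D]
  exact norm_sub_le_integral_deriv (DD H₀ H₁ α) (DD' H₀ H₁ α) (DD_deriv H₀ H₁ α)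
    (DD'_cont H₀ H₁ α) ht (gg H₀ H₁ α) (gg_cont H₀ H₁ α)
    (fun s hs => DD'_bound H₀ H₁ α hH₀ hH₁ hs.1)

end main


/-- **THRIFT decomposition** (first-order error bound). -/
theorem thrift_first_order_error {n Γ : ℕ}
    (H₀ : Matrix (Fin n) (Fin n) ℂ) (H₁ : Fin Γ → Matrix (Fin n) (Fin n) ℂ)
    (hH₀ : H₀.IsHermitian) (hH₁ : ∀ γ, (H₁ γ).IsHermitian)
    (α t : ℝ) (ht : 0 ≤ t) :
    ‖NormedSpace.exp ((-(Complex.I * t)) • (H₀ + α • ∑ γ, H₁ γ)) -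
        NormedSpace.exp ((-(Complex.I * t)) • H₀) *
          (List.ofFn fun γ : Fin Γ =>
            NormedSpace.exp ((Complex.I * t) • H₀) *
              NormedSpace.exp ((-(Complex.I * t)) • (H₀ + α • H₁ γ))).prod‖ ≤
      α ^ 2 * ∫ v in (0:ℝ)..t, ∫ s in (0:ℝ)..v,
        ∑ p ∈ Finset.univ.filter (fun p : Fin Γ × Fin Γ => p.1 < p.2),
          ‖interactionPicture H₀ (H₁ p.1) s * interactionPicture H₀ (H₁ p.2) v -
            interactionPicture H₀ (H₁ p.2) v * interactionPicture H₀ (H₁ p.1) s‖ := by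
  have h := thrift_aux H₀ H₁ α hH₀ hH₁ t ht
  have hgg : (∫ v in (0:ℝ)..t, gg H₀ H₁ α v) =
      α ^ 2 * ∫ v in (0:ℝ)..t, ∫ s in (0:ℝ)..v,
        ∑ p ∈ Finset.univ.filter (fun p : Fin Γ × Fin Γ => p.1 < p.2),
          cc H₀ H₁ p.1 p.2 s v := by
    simp only [gg]
    rw [intervalIntegral.integral_const_mul]
  rw [hgg] at h
  exact h
end
end

section
/- Let T > 0, let h, v : [0, T] → ℝ be continuous nonnegative functions, and let g : [0, ∞) → (0, ∞) be a continuous, nondecreasing, positive function. Suppose that h(x) ≤ ∫₀ˣ v(s) g(h(s)) ds for all x ∈ [0, T]. Define G(s) = ∫₀ˢ du / g(u). Then for every x ∈ [0, T] such that ∫₀ˣ v(s) ds lies in the range of G, one has h(x) ≤ ∫₀ˣ v(s) g(h(s)) ds ≤ G^{−1}( ∫₀ˣ v(s) ds ), where G^{−1} denotes the inverse function of G (G is strictly increasing since g > 0). -/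
noncomputable section

/-- **A Bihari-type integral inequality**: if `h(x) ≤ ∫₀ˣ v(s) g(h(s)) ds` on `[0,T]` with
`h, v` continuous and nonnegative and `g` continuous, nondecreasing and positive, then for
every `x ∈ [0,T]` such that `∫₀ˣ v` lies in the range of `G(s) = ∫₀ˢ du/g(u)` (whose
preimage is the unique `y ≥ 0` with `G y = ∫₀ˣ v`, as `G` is strictly increasing),
`h(x) ≤ ∫₀ˣ v(s) g(h(s)) ds ≤ G⁻¹(∫₀ˣ v(s) ds) = y`. -/
theorem bihari_inequality (T : ℝ) (hT : 0 < T)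
    (h v g : ℝ → ℝ)
    (hh : ContinuousOn h (Set.Icc 0 T)) (hv : ContinuousOn v (Set.Icc 0 T))
    (hhnonneg : ∀ x ∈ Set.Icc (0:ℝ) T, 0 ≤ h x)
    (hvnonneg : ∀ x ∈ Set.Icc (0:ℝ) T, 0 ≤ v x)
    (hg : ContinuousOn g (Set.Ici 0)) (hgmono : MonotoneOn g (Set.Ici 0))
    (hgpos : ∀ u : ℝ, 0 ≤ u → 0 < g u)
    (hineq : ∀ x ∈ Set.Icc (0:ℝ) T, h x ≤ ∫ s in (0:ℝ)..x, v s * g (h s)) :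
    ∀ x ∈ Set.Icc (0:ℝ) T, ∀ y : ℝ, 0 ≤ y →
      (∫ u in (0:ℝ)..y, (g u)⁻¹) = ∫ s in (0:ℝ)..x, v s →
      h x ≤ ∫ s in (0:ℝ)..x, v s * g (h s) ∧
        (∫ s in (0:ℝ)..x, v s * g (h s)) ≤ y := by
  intro x hx y hy hGy
  obtain ⟨hx0, hxT⟩ := hx
  have hmapsh : Set.MapsTo h (Set.Icc 0 T) (Set.Ici 0) := fun s hs => hhnonneg s hs
  set f : ℝ → ℝ := fun s => v s * g (h s) with hfdef
  have hfc : ContinuousOn f (Set.Icc 0 T) := hv.mul (hg.comp hh hmapsh)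
  -- the extended integrand for G
  set g' : ℝ → ℝ := fun u => (g (max u 0))⁻¹ with hg'def
  have hg'pos : ∀ u : ℝ, 0 < g (max u 0) := fun u => hgpos _ (le_max_right _ _)
  have hg'cont : Continuous g' := by
    have hmax : Continuous fun u : ℝ => g (max u 0) :=
      hg.comp_continuous (continuous_id.max continuous_const) fun u => Set.mem_Ici.2 (le_max_right _ _)
    exact hmax.inv₀ fun u => (hg'pos u).ne'
  set G : ℝ → ℝ := fun s => ∫ u in (0:ℝ)..s, g' u with hGdef
  have hGderiv : ∀ s : ℝ, HasDerivAt G (g' s) s := fun s =>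
    (hg'cont.integral_hasStrictDerivAt 0 s).hasDerivAt
  have hGmono : StrictMono G :=
    strictMono_of_hasDerivAt_pos hGderiv fun s => inv_pos.2 (hg'pos s)
  have hGy' : G y = ∫ s in (0:ℝ)..x, v s := by
    rw [← hGy]
    apply intervalIntegral.integral_congr
    intro u hu
    rw [Set.uIcc_of_le hy] at hu
    simp only [hg'def]
    rw [max_eq_left hu.1]
  -- F and W
  set F : ℝ → ℝ := fun t => ∫ s in (0:ℝ)..t, f s with hFdef
  set W : ℝ → ℝ := fun t => ∫ s in (0:ℝ)..t, v s with hWdef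
  have hsubT : ∀ t ∈ Set.Icc (0:ℝ) x, Set.uIcc (0:ℝ) t ⊆ Set.Icc 0 T := by
    intro t ht
    rw [Set.uIcc_of_le ht.1]
    exact Set.Icc_subset_Icc le_rfl (ht.2.trans hxT)
  have hFint : ∀ t ∈ Set.Icc (0:ℝ) x, IntervalIntegrable f MeasureTheory.volume 0 t :=
    fun t ht => (hfc.mono (hsubT t ht)).intervalIntegrable
  have hWint : ∀ t ∈ Set.Icc (0:ℝ) x, IntervalIntegrable v MeasureTheory.volume 0 t :=
    fun t ht => (hv.mono (hsubT t ht)).intervalIntegrable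
  have hFnonneg : ∀ t ∈ Set.Icc (0:ℝ) x, 0 ≤ F t := by
    intro t ht
    apply intervalIntegral.integral_nonneg ht.1
    intro s hs
    have hsT : s ∈ Set.Icc (0:ℝ) T := hsubT t ht (by rw [Set.uIcc_of_le ht.1]; exact hs)
    exact mul_nonneg (hvnonneg s hsT) (hgpos _ (hhnonneg s hsT)).le
  have hhleF : ∀ t ∈ Set.Icc (0:ℝ) x, h t ≤ F t := fun t ht =>
    hineq t ⟨ht.1, ht.2.trans hxT⟩
  -- continuity of F and W on [0, x]
  have hIccx : Set.uIcc (0:ℝ) x = Set.Icc 0 x := Set.uIcc_of_le hx0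
  have hFcont : ContinuousOn F (Set.Icc 0 x) := by
    rw [← hIccx]
    exact intervalIntegral.continuousOn_primitive_interval
      (by rw [hIccx]; exact (hfc.mono (by rw [← hIccx]; exact hsubT x ⟨hx0, le_rfl⟩)).integrableOn_compact isCompact_Icc)
  have hWcont : ContinuousOn W (Set.Icc 0 x) := by
    rw [← hIccx]
    exact intervalIntegral.continuousOn_primitive_interval
      (by rw [hIccx]; exact (hv.mono (by rw [← hIccx]; exact hsubT x ⟨hx0, le_rfl⟩)).integrableOn_compact isCompact_Icc)
  -- Φ and its derivative
  set Φ : ℝ → ℝ := fun t => G (F t) - W t with hΦdef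
  have hΦderiv : ∀ t ∈ Set.Ioo (0:ℝ) x, HasDerivAt Φ (g' (F t) * f t - v t) t := by
    intro t ht
    have htmem : t ∈ Set.Ioo (0:ℝ) T := ⟨ht.1, lt_of_lt_of_le ht.2 hxT⟩
    have hnhds : Set.Ioo (0:ℝ) T ∈ nhds t := isOpen_Ioo.mem_nhds htmem
    have hfIoo : ContinuousOn f (Set.Ioo 0 T) := hfc.mono Set.Ioo_subset_Icc_self
    have hvIoo : ContinuousOn v (Set.Ioo 0 T) := hv.mono Set.Ioo_subset_Icc_self
    have hFt : HasDerivAt F (f t) t :=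
      intervalIntegral.integral_hasDerivAt_right (hFint t (Set.Ioo_subset_Icc_self ht))
        (hfIoo.stronglyMeasurableAtFilter isOpen_Ioo t htmem)
        (hfIoo.continuousAt hnhds)
    have hWt : HasDerivAt W (v t) t :=
      intervalIntegral.integral_hasDerivAt_right (hWint t (Set.Ioo_subset_Icc_self ht))
        (hvIoo.stronglyMeasurableAtFilter isOpen_Ioo t htmem)
        (hvIoo.continuousAt hnhds)
    exact ((hGderiv (F t)).comp t hFt).sub hWt
  have hΦ'nonpos : ∀ t ∈ Set.Ioo (0:ℝ) x, g' (F t) * f t - v t ≤ 0 := by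
    intro t ht
    have htIcc : t ∈ Set.Icc (0:ℝ) x := Set.Ioo_subset_Icc_self ht
    have htT : t ∈ Set.Icc (0:ℝ) T := ⟨htIcc.1, htIcc.2.trans hxT⟩
    have hF0 : 0 ≤ F t := hFnonneg t htIcc
    have hgF : g' (F t) = (g (F t))⁻¹ := by simp only [hg'def]; rw [max_eq_left hF0]
    have hghF : g (h t) ≤ g (F t) :=
      hgmono (hhnonneg t htT) hF0 (hhleF t htIcc)
    have hgFpos : 0 < g (F t) := hgpos _ hF0
    rw [hgF, sub_nonpos, hfdef]
    calc (g (F t))⁻¹ * (v t * g (h t)) ≤ (g (F t))⁻¹ * (v t * g (F t)) := by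
          apply mul_le_mul_of_nonneg_left _ (inv_nonneg.2 hgFpos.le)
          exact mul_le_mul_of_nonneg_left hghF (hvnonneg t htT)
      _ = v t := by field_simp
  -- Φ is antitone on [0, x]
  have hΦanti : AntitoneOn Φ (Set.Icc 0 x) := by
    apply antitoneOn_of_deriv_nonpos (convex_Icc 0 x)
    · have hGcont : Continuous G :=
        continuous_iff_continuousAt.2 fun s => (hGderiv s).differentiableAt.continuousAt
      exact (hGcont.comp_continuousOn hFcont).sub hWcont
    · intro t ht
      rw [interior_Icc] at ht
      exact ((hΦderiv t ht).differentiableAt).differentiableWithinAt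
    · intro t ht
      rw [interior_Icc] at ht
      rw [(hΦderiv t ht).deriv]
      exact hΦ'nonpos t ht
  have hΦ0 : Φ 0 = 0 := by
    simp only [hΦdef, hFdef, hWdef, hGdef, intervalIntegral.integral_same, sub_zero]
  have hΦx : Φ x ≤ 0 := by
    rw [← hΦ0]
    exact hΦanti (Set.left_mem_Icc.2 hx0) ⟨hx0, le_rfl⟩ hx0
  have hGFx : G (F x) ≤ G y := by
    rw [hGy']
    have := sub_nonpos.1 hΦx
    simpa [hΦdef, hWdef] using this
  refine ⟨hineq x ⟨hx0, hxT⟩, ?_⟩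
  exact hGmono.le_iff_le.1 hGFx
end
end

section
/- Fix integers d ≥ 1, R ≥ 1, Γ ≥ 1, and p ≥ 1. Let Λ ⊂ ℤ^d be a finite set with |Λ| = n, equipped with the Euclidean distance D, and for each subset Z ⊆ Λ write diam(Z) = max{ D(i, j) : i, j ∈ Z }. For γ = 1, …, Γ, let H_γ be an operator on the Hilbert space (ℂ²)^{⊗Λ} of the form H_γ = Σ_{Z ⊆ Λ} H_{γ, Z}, where each H_{γ, Z} acts nontrivially only on the tensor factors indexed by Z, ‖H_{γ, Z}‖ ≤ 1, and H_{γ, Z} = 0 whenever diam(Z) > R. Then there exists a constant C depending only on d, R, Γ, and p (and not on n, Λ, or the operators H_{γ, Z}) such that Σ_{γ₁, …, γ_{p+1} = 1}^{Γ} ‖ [ H_{γ_{p+1}}, ⋯ [ H_{γ₂}, H_{γ₁} ] ⋯ ] ‖ ≤ C · n. -/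
open scoped Matrix.Norms.L2Operator

noncomputable section

/-- Euclidean distance between two points of `ℤ^d`. -/
def euclDist {d : ℕ} (i j : Fin d → ℤ) : ℝ :=
  Real.sqrt (∑ l, ((i l : ℝ) - (j l : ℝ)) ^ 2)

/-- An operator on `(ℂ²)^{⊗ι}` (represented as a matrix indexed by classical configurations
`ι → Fin 2`) acts nontrivially only on the tensor factors indexed by `Z`. -/
def SupportedOn {ι : Type*} [Fintype ι] [DecidableEq ι] (Z : Finset ι)
    (M : Matrix (ι → Fin 2) (ι → Fin 2) ℂ) : Prop :=
  (∀ x y : ι → Fin 2, M x y ≠ 0 → ∀ i ∉ Z, x i = y i) ∧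
  (∀ x y x' y' : ι → Fin 2,
    (∀ i ∈ Z, x i = x' i) → (∀ i ∈ Z, y i = y' i) →
    (∀ i ∉ Z, x i = y i) → (∀ i ∉ Z, x' i = y' i) → M x y = M x' y')

/-- The nested commutator `[f_p, ⋯ [f_1, f_0] ⋯ ]` (with `f_0` innermost-right). -/
def nestedCommutator {R : Type*} [Ring R] (p : ℕ) (f : Fin (p + 1) → R) : R :=
  (List.ofFn fun i : Fin p => f i.succ).foldl (fun acc X => X * acc - acc * X) (f 0)

section NC
variable {A : Type*} [Ring A]

lemma nc_zero (f : Fin 1 → A) : nestedCommutator 0 f = f 0 := by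
  simp [nestedCommutator]

lemma nc_succ (p : ℕ) (f : Fin (p + 2) → A) :
    nestedCommutator (p + 1) f =
      f (Fin.last (p + 1)) * nestedCommutator p (fun i => f i.castSucc)
        - nestedCommutator p (fun i => f i.castSucc) * f (Fin.last (p + 1)) := by
  unfold nestedCommutator
  rw [List.ofFn_succ', List.concat_eq_append, List.foldl_append]
  simp [Fin.succ_last, Fin.castSucc_zero]

lemma nc_eq_zero {p : ℕ} (f : Fin (p + 1) → A) (k : Fin (p + 1)) (hk : f k = 0) :
    nestedCommutator p f = 0 := by
  induction p with
  | zero =>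
      have : k = 0 := by ext; omega
      rw [nc_zero, ← this, hk]
  | succ p ih =>
      rw [nc_succ]
      rcases eq_or_ne k (Fin.last (p + 1)) with rfl | h
      · rw [hk]; simp
      · obtain ⟨k', rfl⟩ := Fin.exists_castSucc_eq.mpr h
        rw [ih (fun i => f i.castSucc) k' hk]; simp

lemma nc_sum {p : ℕ} {σ : Type*} [Fintype σ] (g : Fin (p + 1) → σ → A) :
    nestedCommutator p (fun i => ∑ z : σ, g i z)
      = ∑ zvec : Fin (p + 1) → σ, nestedCommutator p (fun i => g i (zvec i)) := by
  induction p with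
  | zero =>
      rw [nc_zero]
      rw [← (Equiv.funUnique (Fin 1) σ).symm.sum_comp]
      simp [nc_zero]
  | succ p ih =>
      rw [nc_succ, ih]
      rw [← (Fin.snocEquiv (fun _ : Fin (p+2) => σ)).sum_comp
        (fun zvec => nestedCommutator (p+1) (fun i => g i (zvec i))), Fintype.sum_prod_type]
      simp only [Fin.snocEquiv_apply, nc_succ, Fin.snoc_last, Fin.snoc_castSucc]
      simp only [Finset.sum_mul, Finset.mul_sum]
      rw [Finset.sum_comm]
      simp only [← Finset.sum_sub_distrib]

section Supp
variable {ι : Type*} [Fintype ι] [DecidableEq ι]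
variable {Z Z' : Finset ι} {M N : Matrix (ι → Fin 2) (ι → Fin 2) ℂ}

lemma SupportedOn.mono (h : Z ⊆ Z') (hM : SupportedOn Z M) : SupportedOn Z' M := by
  obtain ⟨h1, h2⟩ := hM
  constructor
  · exact fun x y hxy i hi => h1 x y hxy i fun hiZ => hi (h hiZ)
  · intro x y x' y' hxx hyy hxy hx'y'
    by_cases hc : ∀ i ∉ Z, x i = y i
    · refine h2 x y x' y' (fun i hi => hxx i (h hi)) (fun i hi => hyy i (h hi)) hc ?_
      intro i hi
      by_cases hiZ' : i ∈ Z'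
      · rw [← hxx i hiZ', ← hyy i hiZ']; exact hc i hi
      · exact hx'y' i hiZ'
    · push_neg at hc
      obtain ⟨i, hiZ, hne⟩ := hc
      have hiZ' : i ∈ Z' := by
        by_contra hiZ'
        exact hne (hxy i hiZ')
      have h0 : M x y = 0 := by
        by_contra h0; exact hne (h1 x y h0 i hiZ)
      have h0' : M x' y' = 0 := by
        by_contra h0'
        exact hne (by rw [hxx i hiZ', hyy i hiZ']; exact h1 x' y' h0' i hiZ)
      rw [h0, h0']

lemma SupportedOn.sub (hM : SupportedOn Z M) (hN : SupportedOn Z N) :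
    SupportedOn Z (M - N) := by
  obtain ⟨hM1, hM2⟩ := hM; obtain ⟨hN1, hN2⟩ := hN
  constructor
  · intro x y hxy i hi
    rw [Matrix.sub_apply] at hxy
    rcases eq_or_ne (M x y) 0 with h | h
    · exact hN1 x y (fun h' => hxy (by rw [h, h', sub_zero])) i hi
    · exact hM1 x y h i hi
  · intro x y x' y' hxx hyy hxy hx'y'
    rw [Matrix.sub_apply, Matrix.sub_apply,
      hM2 x y x' y' hxx hyy hxy hx'y', hN2 x y x' y' hxx hyy hxy hx'y']

lemma SupportedOn.mul (hM : SupportedOn Z M) (hN : SupportedOn Z N) :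
    SupportedOn Z (M * N) := by
  classical
  obtain ⟨hM1, hM2⟩ := hM; obtain ⟨hN1, hN2⟩ := hN
  constructor
  · intro x y hxy i hi
    rw [Matrix.mul_apply] at hxy
    obtain ⟨z, -, hz⟩ := Finset.exists_ne_zero_of_sum_ne_zero hxy
    have hMz : M x z ≠ 0 := fun h => hz (by simp [h])
    have hNz : N z y ≠ 0 := fun h => hz (by simp [h])
    rw [hM1 x z hMz i hi, hN1 z y hNz i hi]
  · intro x y x' y' hxx hyy hxy hx'y'
    rw [Matrix.mul_apply, Matrix.mul_apply]
    have hL : ∑ z, M x z * N z y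
        = ∑ z ∈ Finset.univ.filter (fun z => ∀ i ∉ Z, z i = x i), M x z * N z y := by
      refine (Finset.sum_subset (Finset.filter_subset _ _) ?_).symm
      intro z _ hz
      simp only [Finset.mem_filter, Finset.mem_univ, true_and] at hz
      push_neg at hz
      obtain ⟨i, hiZ, hne⟩ := hz
      have : M x z = 0 := by
        by_contra h
        exact hne ((hM1 x z h i hiZ).symm)
      rw [this, zero_mul]
    have hR : ∑ z, M x' z * N z y'
        = ∑ z ∈ Finset.univ.filter (fun z => ∀ i ∉ Z, z i = x' i), M x' z * N z y' := by
      refine (Finset.sum_subset (Finset.filter_subset _ _) ?_).symm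
      intro z _ hz
      simp only [Finset.mem_filter, Finset.mem_univ, true_and] at hz
      push_neg at hz
      obtain ⟨i, hiZ, hne⟩ := hz
      have : M x' z = 0 := by
        by_contra h
        exact hne ((hM1 x' z h i hiZ).symm)
      rw [this, zero_mul]
    rw [hL, hR]
    refine Finset.sum_nbij' (fun z => fun i => if i ∈ Z then z i else x' i)
      (fun z => fun i => if i ∈ Z then z i else x i) ?_ ?_ ?_ ?_ ?_
    · intro z hz
      simp only [Finset.mem_filter, Finset.mem_univ, true_and]
      intro i hi; rw [if_neg hi]
    · intro z hz
      simp only [Finset.mem_filter, Finset.mem_univ, true_and]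
      intro i hi; rw [if_neg hi]
    · intro z hz
      simp only [Finset.mem_filter, Finset.mem_univ, true_and] at hz
      funext i
      by_cases hi : i ∈ Z
      · simp [hi]
      · simp [hi, hz i hi]
    · intro z hz
      simp only [Finset.mem_filter, Finset.mem_univ, true_and] at hz
      funext i
      by_cases hi : i ∈ Z
      · simp [hi]
      · simp [hi, hz i hi]
    · intro z hz
      simp only [Finset.mem_filter, Finset.mem_univ, true_and] at hz
      have e1 : M x z = M x' (fun i => if i ∈ Z then z i else x' i) := by
        refine hM2 x z x' _ hxx (fun i hi => (if_pos hi).symm)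
          (fun i hi => (hz i hi).symm) (fun i hi => (if_neg hi).symm)
      have e2 : N z y = N (fun i => if i ∈ Z then z i else x' i) y' := by
        refine hN2 z y _ y' (fun i hi => (if_pos hi).symm) hyy
          (fun i hi => by rw [hz i hi, hxy i hi]) (fun i hi => by rw [if_neg hi, hx'y' i hi])
      rw [e1, e2]

lemma SupportedOn.commute_disjoint {W : Finset ι} (hM : SupportedOn Z M)
    (hN : SupportedOn W N) (hZW : Disjoint Z W) : M * N = N * M := by
  classical
  obtain ⟨hM1, hM2⟩ := hM; obtain ⟨hN1, hN2⟩ := hN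
  have hZW' : ∀ i ∈ Z, i ∉ W := fun i hi => Finset.disjoint_left.mp hZW hi
  have hWZ' : ∀ i ∈ W, i ∉ Z := fun i hi => Finset.disjoint_right.mp hZW hi
  ext x y
  rw [Matrix.mul_apply, Matrix.mul_apply]
  by_cases hc : ∀ i, i ∉ Z → i ∉ W → x i = y i
  · set z₀ : ι → Fin 2 := fun i => if i ∈ Z then y i else x i with hz₀
    set z₁ : ι → Fin 2 := fun i => if i ∈ W then y i else x i with hz₁
    have hL : ∑ z, M x z * N z y = M x z₀ * N z₀ y := by
      refine Finset.sum_eq_single z₀ ?_ (by simp)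
      intro z _ hz
      have : ∃ i, z i ≠ z₀ i := by
        by_contra h; push_neg at h; exact hz (funext h)
      obtain ⟨i, hi⟩ := this
      by_cases hiZ : i ∈ Z
      · have : N z y = 0 := by
          by_contra h
          exact hi (by rw [hz₀]; simp only [if_pos hiZ]; exact hN1 z y h i (hZW' i hiZ))
        rw [this, mul_zero]
      · have : M x z = 0 := by
          by_contra h
          exact hi (by rw [hz₀]; simp only [if_neg hiZ]; exact (hM1 x z h i hiZ).symm)
        rw [this, zero_mul]
    have hR : ∑ z, N x z * M z y = N x z₁ * M z₁ y := by
      refine Finset.sum_eq_single z₁ ?_ (by simp)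
      intro z _ hz
      have : ∃ i, z i ≠ z₁ i := by
        by_contra h; push_neg at h; exact hz (funext h)
      obtain ⟨i, hi⟩ := this
      by_cases hiW : i ∈ W
      · have : M z y = 0 := by
          by_contra h
          exact hi (by rw [hz₁]; simp only [if_pos hiW]; exact hM1 z y h i (hWZ' i hiW))
        rw [this, mul_zero]
      · have : N x z = 0 := by
          by_contra h
          exact hi (by rw [hz₁]; simp only [if_neg hiW]; exact (hN1 x z h i hiW).symm)
        rw [this, zero_mul]
    rw [hL, hR]
    have e1 : M x z₀ = M z₁ y := by
      refine hM2 x z₀ z₁ y ?_ ?_ ?_ ?_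
      · intro i hi; rw [hz₁]; simp [hZW' i hi]
      · intro i hi; rw [hz₀]; simp [hi]
      · intro i hi; rw [hz₀]; simp [hi]
      · intro i hi
        rw [hz₁]
        by_cases hiW : i ∈ W
        · simp [hiW]
        · simp only [if_neg hiW]; exact hc i hi hiW
    have e2 : N z₀ y = N x z₁ := by
      refine hN2 z₀ y x z₁ ?_ ?_ ?_ ?_
      · intro i hi; rw [hz₀]; simp [hWZ' i hi]
      · intro i hi; rw [hz₁]; simp [hi]
      · intro i hi
        rw [hz₀]
        by_cases hiZ : i ∈ Z
        · simp [hiZ]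
        · simp only [if_neg hiZ]; exact hc i hiZ hi
      · intro i hi; rw [hz₁]; simp [hi]
    rw [e1, e2, mul_comm]
  · push_neg at hc
    obtain ⟨i, hiZ, hiW, hne⟩ := hc
    rw [Finset.sum_eq_zero, Finset.sum_eq_zero]
    · intro z _
      rcases eq_or_ne (N x z) 0 with h | h
      · rw [h, zero_mul]
      · have hx : x i = z i := hN1 x z h i hiW
        have : M z y = 0 := by
          by_contra h'
          exact hne (hx.trans (hM1 z y h' i hiZ))
        rw [this, mul_zero]
    · intro z _
      rcases eq_or_ne (M x z) 0 with h | h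
      · rw [h, zero_mul]
      · have hx : x i = z i := hM1 x z h i hiZ
        have : N z y = 0 := by
          by_contra h'
          exact hne (hx.trans (hN1 z y h' i hiW))
        rw [this, mul_zero]

end Supp

open scoped Matrix.Norms.L2Operator

section Supp2
variable {ι : Type*} [Fintype ι] [DecidableEq ι]

lemma SupportedOn.nc {S : Finset ι} {p : ℕ}
    {f : Fin (p + 1) → Matrix (ι → Fin 2) (ι → Fin 2) ℂ}
    (hf : ∀ i, SupportedOn S (f i)) : SupportedOn S (nestedCommutator p f) := by
  induction p with
  | zero => rw [nc_zero]; exact hf 0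
  | succ p ih =>
      rw [nc_succ]
      have h := ih (f := fun i => f i.castSucc) (fun i => hf i.castSucc)
      exact ((hf (Fin.last (p+1))).mul h).sub (h.mul (hf (Fin.last (p+1))))

lemma nc_vanish {p : ℕ} (f : Fin (p + 1) → Matrix (ι → Fin 2) (ι → Fin 2) ℂ)
    (Z : Fin (p + 1) → Finset ι) (hf : ∀ i, SupportedOn (Z i) (f i)) (k : Fin p)
    (hdis : ∀ j : Fin (p + 1), j ≤ k.castSucc → Disjoint (Z k.succ) (Z j)) :
    nestedCommutator p f = 0 := by
  induction p with
  | zero => exact absurd k.2 (by omega)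
  | succ p ih =>
      rw [nc_succ]
      rcases eq_or_ne k (Fin.last p) with rfl | hk
      · have hsupp : SupportedOn (Finset.univ.biUnion fun j : Fin (p + 1) => Z j.castSucc)
            (nestedCommutator p fun i => f i.castSucc) := by
          refine SupportedOn.nc fun i => (hf i.castSucc).mono ?_
          exact Finset.subset_biUnion_of_mem (fun j : Fin (p+1) => Z j.castSucc)
            (Finset.mem_univ i)
        have hdisj : Disjoint (Z (Fin.last (p + 1)))
            (Finset.univ.biUnion fun j : Fin (p + 1) => Z j.castSucc) := by
          rw [Finset.disjoint_biUnion_right]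
          intro j _
          have := hdis j.castSucc (by
            rw [Fin.castSucc_le_castSucc_iff]
            exact Fin.le_last j)
          rwa [Fin.succ_last] at this
        rw [SupportedOn.commute_disjoint (hf (Fin.last (p+1))) hsupp hdisj, sub_self]
      · obtain ⟨k', rfl⟩ := Fin.exists_castSucc_eq.mpr hk
        rw [ih (fun i => f i.castSucc) (fun i => Z i.castSucc) (fun i => hf i.castSucc) k' ?_]
        · simp
        · intro j hj
          have h1 := hdis j.castSucc (by
            rw [Fin.castSucc_le_castSucc_iff]
            exact hj)
          simp only [Fin.succ_castSucc] at h1 ⊢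
          exact h1
  
lemma nc_norm_le {p : ℕ} (f : Fin (p + 1) → Matrix (ι → Fin 2) (ι → Fin 2) ℂ)
    (hf : ∀ i, ‖f i‖ ≤ 1) : ‖nestedCommutator p f‖ ≤ 2 ^ p := by
  induction p with
  | zero => rw [nc_zero]; simpa using hf 0
  | succ p ih =>
      rw [nc_succ]
      have hN := ih (f := fun i => f i.castSucc) (fun i => hf i.castSucc)
      have hX := hf (Fin.last (p + 1))
      have hN0 : (0:ℝ) ≤ ‖nestedCommutator p fun i => f i.castSucc‖ := norm_nonneg _
      have hX0 : (0:ℝ) ≤ ‖f (Fin.last (p + 1))‖ := norm_nonneg _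
      calc ‖f (Fin.last (p+1)) * nestedCommutator p (fun i => f i.castSucc)
            - nestedCommutator p (fun i => f i.castSucc) * f (Fin.last (p+1))‖
          ≤ ‖f (Fin.last (p+1)) * nestedCommutator p (fun i => f i.castSucc)‖
            + ‖nestedCommutator p (fun i => f i.castSucc) * f (Fin.last (p+1))‖ :=
            norm_sub_le _ _
        _ ≤ ‖f (Fin.last (p+1))‖ * ‖nestedCommutator p (fun i => f i.castSucc)‖
            + ‖nestedCommutator p (fun i => f i.castSucc)‖ * ‖f (Fin.last (p+1))‖ := by
            gcongr <;> [exact Matrix.l2_opNorm_mul _ _; exact Matrix.l2_opNorm_mul _ _]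
        _ ≤ 1 * 2 ^ p + 2 ^ p * 1 := by
            gcongr
        _ = 2 ^ (p + 1) := by ring

end Supp2

/-- Euclidean distance between two points of `ℤ^d`. (declared in base) -/

lemma abs_coord_le_euclDist {d : ℕ} (i j : Fin d → ℤ) (l : Fin d) :
    ((|i l - j l| : ℤ) : ℝ) ≤ euclDist i j := by
  have h1 : ((i l : ℝ) - j l) ^ 2 ≤ ∑ m, ((i m : ℝ) - (j m : ℝ)) ^ 2 :=
    Finset.single_le_sum (f := fun m => ((i m : ℝ) - (j m : ℝ)) ^ 2)
      (fun m _ => sq_nonneg _) (Finset.mem_univ l)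
  calc ((|i l - j l| : ℤ) : ℝ) = |(i l : ℝ) - (j l : ℝ)| := by push_cast; ring_nf
    _ = Real.sqrt (((i l : ℝ) - (j l : ℝ)) ^ 2) := (Real.sqrt_sq_eq_abs _).symm
    _ ≤ euclDist i j := Real.sqrt_le_sqrt h1

open scoped Matrix.Norms.L2Operator


set_option maxHeartbeats 1000000 in
/-- **Linear system-size scaling of nested commutators of geometrically local Hamiltonians**:
for fixed `d, R, Γ, p` there is a constant `C` (independent of the lattice `Λ ⊂ ℤ^d`, of
`n = |Λ|`, and of the local terms) such that for any geometrically local Hamiltonians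
`H_γ = Σ_{Z ⊆ Λ} H_{γ,Z}` with `‖H_{γ,Z}‖ ≤ 1` and `H_{γ,Z} = 0` whenever `diam(Z) > R`,
`Σ_{γ₁,…,γ_{p+1}} ‖[H_{γ_{p+1}}, ⋯ [H_{γ₂}, H_{γ₁}] ⋯ ]‖ ≤ C · n`. -/
theorem nested_commutator_sum_le_linear (d R Γ p : ℕ)
    (hd : 1 ≤ d) (hR : 1 ≤ R) (hΓ : 1 ≤ Γ) (hp : 1 ≤ p) :
    ∃ C : ℝ, ∀ (Λ : Finset (Fin d → ℤ))
      (H : Fin Γ → Finset {x // x ∈ Λ} →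
        Matrix ({x // x ∈ Λ} → Fin 2) ({x // x ∈ Λ} → Fin 2) ℂ),
      (∀ γ Z, SupportedOn Z (H γ Z)) →
      (∀ γ Z, ‖H γ Z‖ ≤ 1) →
      (∀ γ (Z : Finset {x // x ∈ Λ}),
        (∃ i ∈ Z, ∃ j ∈ Z, (R : ℝ) < euclDist (i : Fin d → ℤ) (j : Fin d → ℤ)) →
        H γ Z = 0) →
      ∑ γvec : Fin (p + 1) → Fin Γ,
        ‖nestedCommutator p (fun i => ∑ Z : Finset {x // x ∈ Λ}, H (γvec i) Z)‖ ≤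
          C * (Λ.card : ℝ) := by
  classical
  set K : ℕ := (2 * ((p + 1) * R) + 1) ^ d with hK
  refine ⟨(Fintype.card (Fin (p + 1) → Fin Γ) : ℝ) * (((2 ^ K) ^ (p + 1) : ℕ) : ℝ) * 2 ^ p, ?_⟩
  intro Λ H hsupp hnorm hloc
  -- the admissibility predicate
  set Adm : (Fin (p + 1) → Finset {x // x ∈ Λ}) → Prop := fun Zv =>
    (∀ k : Fin p, ∃ j : Fin (p + 1), j ≤ k.castSucc ∧ (Zv k.succ ∩ Zv j).Nonempty) ∧
    (∀ k : Fin (p + 1), ∀ i ∈ Zv k, ∀ j ∈ Zv k, ∀ l,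
      |(i : Fin d → ℤ) l - (j : Fin d → ℤ) l| ≤ (R : ℤ)) with hAdm
  set A : Finset (Fin (p + 1) → Finset {x // x ∈ Λ}) := Finset.univ.filter Adm with hA
  set B : {x // x ∈ Λ} → Finset {x // x ∈ Λ} := fun x =>
    Finset.univ.filter (fun y : {x // x ∈ Λ} => ∀ l,
      |(y : Fin d → ℤ) l - (x : Fin d → ℤ) l| ≤ (((p + 1) * R : ℕ) : ℤ)) with hB
  -- Step 1 : each summand is at most |A| * 2^p
  have step1 : ∀ γvec : Fin (p + 1) → Fin Γ,
      ‖nestedCommutator p (fun i => ∑ Z : Finset {x // x ∈ Λ}, H (γvec i) Z)‖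
        ≤ (A.card : ℝ) * 2 ^ p := by
    intro γvec
    rw [nc_sum]
    calc ‖∑ Zv : Fin (p + 1) → Finset {x // x ∈ Λ},
            nestedCommutator p (fun i => H (γvec i) (Zv i))‖
        ≤ ∑ Zv : Fin (p + 1) → Finset {x // x ∈ Λ},
            ‖nestedCommutator p (fun i => H (γvec i) (Zv i))‖ := norm_sum_le _ _
      _ = ∑ Zv ∈ A, ‖nestedCommutator p (fun i => H (γvec i) (Zv i))‖ := by
          refine (Finset.sum_subset (Finset.subset_univ A) ?_).symm
          intro Zv _ hZv
          rw [hA, Finset.mem_filter] at hZv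
          simp only [Finset.mem_univ, true_and] at hZv
          rw [norm_eq_zero]
          by_cases hchain : ∀ k : Fin p, ∃ j : Fin (p + 1),
              j ≤ k.castSucc ∧ (Zv k.succ ∩ Zv j).Nonempty
          · have hlf : ¬ (∀ k : Fin (p + 1), ∀ i ∈ Zv k, ∀ j ∈ Zv k, ∀ l,
                |(i : Fin d → ℤ) l - (j : Fin d → ℤ) l| ≤ (R : ℤ)) := by
              intro h
              exact hZv ⟨hchain, h⟩
            push_neg at hlf
            obtain ⟨k, i, hi, j, hj, l, hl⟩ := hlf
            have hH : H (γvec k) (Zv k) = 0 := by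
              refine hloc (γvec k) (Zv k) ⟨i, hi, j, hj, ?_⟩
              have h2 : ((R : ℤ) : ℝ) < ((|((i : Fin d → ℤ)) l - ((j : Fin d → ℤ)) l| : ℤ) : ℝ) :=
                Int.cast_lt.mpr hl
              refine lt_of_lt_of_le ?_ (abs_coord_le_euclDist _ _ l)
              exact_mod_cast h2
            exact nc_eq_zero _ k (by rw [hH])
          · push_neg at hchain
            obtain ⟨k, hk⟩ := hchain
            refine nc_vanish _ (fun i => Zv i) (fun i => hsupp _ _) k ?_
            intro j hj
            rw [Finset.disjoint_iff_inter_eq_empty]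
            rw [← Finset.not_nonempty_iff_eq_empty]
            exact Finset.not_nonempty_iff_eq_empty.mpr (hk j hj)
      _ ≤ A.card • (2 ^ p : ℝ) := Finset.sum_le_card_nsmul _ _ _
          (fun Zv _ => nc_norm_le (fun i => H (γvec i) (Zv i)) (fun i => hnorm (γvec i) (Zv i)))
      _ = (A.card : ℝ) * 2 ^ p := by rw [nsmul_eq_mul]
  -- Step 2 : cardinality of A
  have hAsub : A ⊆ Finset.univ.biUnion (fun x : {x // x ∈ Λ} =>
      Finset.univ.filter (fun Zv : Fin (p + 1) → Finset {x // x ∈ Λ} => ∀ k, Zv k ⊆ B x)) := by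
    intro Zv hZv
    rw [hA, Finset.mem_filter] at hZv
    obtain ⟨-, hchain, hlocal⟩ := hZv
    obtain ⟨j, hj0, hne⟩ := hchain ⟨0, hp⟩
    have hj' : j = 0 := by
      have hc0 : (⟨0, hp⟩ : Fin p).castSucc = 0 := rfl
      rw [hc0] at hj0
      exact le_antisymm hj0 (Fin.zero_le _)
    subst hj'
    obtain ⟨x, hx⟩ := hne
    rw [Finset.mem_inter] at hx
    have hx0 : x ∈ Zv 0 := hx.2
    have key : ∀ m : ℕ, ∀ k : Fin (p + 1), (k : ℕ) ≤ m → ∀ y ∈ Zv k, ∀ l,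
        |(y : Fin d → ℤ) l - (x : Fin d → ℤ) l| ≤ (((k : ℕ) : ℤ) + 1) * R := by
      intro m
      induction m with
      | zero =>
          intro k hk y hy l
          have hk0 : k = 0 := Fin.ext (by simp only [Fin.val_zero]; omega)
          subst hk0
          have h := hlocal 0 y hy x hx0 l
          calc |(y : Fin d → ℤ) l - (x : Fin d → ℤ) l| ≤ (R : ℤ) := h
            _ ≤ (((0 : Fin (p+1)) : ℕ) + 1 : ℤ) * R := by simp
      | succ m ih =>
          intro k hk y hy l
          by_cases hkm : (k : ℕ) ≤ m
          · exact ih k hkm y hy l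
          · have hkv : (k : ℕ) = m + 1 := by omega
            have hk0 : k ≠ 0 := by
              intro h
              rw [h] at hkv
              simp at hkv
            obtain ⟨k', rfl⟩ := Fin.exists_succ_eq_of_ne_zero hk0
            obtain ⟨j', hj'le, hne'⟩ := hchain k'
            obtain ⟨z, hz⟩ := hne'
            rw [Finset.mem_inter] at hz
            have h1 := hlocal k'.succ y hy z hz.1 l
            have hj'v : (j' : ℕ) ≤ m := by
              rw [Fin.le_def] at hj'le
              simp only [Fin.coe_castSucc] at hj'le
              have : (k'.succ : ℕ) = (k' : ℕ) + 1 := Fin.val_succ k'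
              omega
            have h2 : |(z : Fin d → ℤ) l - (x : Fin d → ℤ) l|
                ≤ (((j' : ℕ) : ℤ) + 1) * R := ih j' hj'v z hz.2 l
            have hRnn : (0 : ℤ) ≤ (R : ℤ) := Int.ofNat_nonneg R
            have hjk : ((j' : ℕ) : ℤ) + 1 + 1 ≤ ((k'.succ : ℕ) : ℤ) + 1 := by
              have : (k'.succ : ℕ) = (k' : ℕ) + 1 := Fin.val_succ k'
              have hj'k : (j' : ℕ) ≤ (k' : ℕ) := by
                rw [Fin.le_def] at hj'le
                simpa using hj'le
              push_cast
              omega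
            calc |(y : Fin d → ℤ) l - (x : Fin d → ℤ) l|
                ≤ |(y : Fin d → ℤ) l - (z : Fin d → ℤ) l|
                  + |(z : Fin d → ℤ) l - (x : Fin d → ℤ) l| := abs_sub_le _ _ _
              _ ≤ (R : ℤ) + (((j' : ℕ) : ℤ) + 1) * R := add_le_add h1 h2
              _ = (((j' : ℕ) : ℤ) + 1 + 1) * R := by ring
              _ ≤ (((k'.succ : ℕ) : ℤ) + 1) * R := by
                  exact mul_le_mul_of_nonneg_right hjk hRnn
    rw [Finset.mem_biUnion]
    refine ⟨x, Finset.mem_univ x, ?_⟩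
    rw [Finset.mem_filter]
    refine ⟨Finset.mem_univ _, ?_⟩
    intro k y hy
    rw [hB]
    simp only [Finset.mem_filter, Finset.mem_univ, true_and]
    intro l
    refine le_trans (key p k (by omega) y hy l) ?_
    have hkp : (k : ℕ) + 1 ≤ p + 1 := k.isLt
    have : (((k : ℕ) : ℤ) + 1) * R ≤ ((p : ℤ) + 1) * R := by
      refine mul_le_mul_of_nonneg_right ?_ (Int.ofNat_nonneg R)
      exact_mod_cast hkp
    refine this.trans ?_
    push_cast
    ring_nf
    omega
  have hBcard : ∀ x : {x // x ∈ Λ}, (B x).card ≤ K := by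
    intro x
    have h1 : (B x).card ≤ (Fintype.piFinset fun l : Fin d =>
        Finset.Icc ((x : Fin d → ℤ) l - (((p+1)*R : ℕ) : ℤ))
          ((x : Fin d → ℤ) l + (((p+1)*R : ℕ) : ℤ))).card := by
      refine Finset.card_le_card_of_injOn (fun y => (y : Fin d → ℤ)) ?_ ?_
      · intro y hy
        rw [hB] at hy
        simp only [Finset.mem_coe, Finset.mem_filter, Finset.mem_univ, true_and] at hy
        rw [Finset.mem_coe, Fintype.mem_piFinset]
        intro l
        rw [Finset.mem_Icc]
        have h := hy l
        rw [abs_le] at h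
        constructor <;> linarith [h.1, h.2]
      · intro y _ y' _ h
        exact Subtype.ext h
    refine h1.trans ?_
    rw [Fintype.card_piFinset]
    have h2 : ∀ l : Fin d, (Finset.Icc ((x : Fin d → ℤ) l - (((p+1)*R : ℕ) : ℤ))
        ((x : Fin d → ℤ) l + (((p+1)*R : ℕ) : ℤ))).card = 2 * ((p+1)*R) + 1 := by
      intro l
      rw [Int.card_Icc]
      have : (x : Fin d → ℤ) l + (((p+1)*R : ℕ) : ℤ) + 1
          - ((x : Fin d → ℤ) l - (((p+1)*R : ℕ) : ℤ)) = ((2 * ((p+1)*R) + 1 : ℕ) : ℤ) := by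
        push_cast; ring
      rw [this, Int.toNat_natCast]
    calc ∏ l : Fin d, (Finset.Icc _ _).card = ∏ l : Fin d, (2 * ((p+1)*R) + 1) :=
        Finset.prod_congr rfl (fun l _ => h2 l)
      _ = (2 * ((p+1)*R) + 1) ^ d := by
        rw [Finset.prod_const, Finset.card_univ, Fintype.card_fin]
      _ ≤ K := le_rfl
  have hTcard : ∀ x : {x // x ∈ Λ}, (Finset.univ.filter
      (fun Zv : Fin (p + 1) → Finset {x // x ∈ Λ} => ∀ k, Zv k ⊆ B x)).card ≤ (2 ^ K) ^ (p + 1) := by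
    intro x
    have hsub : (Finset.univ.filter (fun Zv : Fin (p + 1) → Finset {x // x ∈ Λ} => ∀ k, Zv k ⊆ B x))
        ⊆ Fintype.piFinset (fun _ : Fin (p + 1) => (B x).powerset) := by
      intro Zv hZv
      rw [Finset.mem_filter] at hZv
      rw [Fintype.mem_piFinset]
      intro k
      rw [Finset.mem_powerset]
      exact hZv.2 k
    refine (Finset.card_le_card hsub).trans ?_
    rw [Fintype.card_piFinset]
    calc ∏ _k : Fin (p + 1), (B x).powerset.card
        = ∏ _k : Fin (p + 1), 2 ^ (B x).card := by
          refine Finset.prod_congr rfl (fun k _ => ?_)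
          rw [Finset.card_powerset]
      _ = (2 ^ (B x).card) ^ (p + 1) := by
          rw [Finset.prod_const, Finset.card_univ, Fintype.card_fin]
      _ ≤ (2 ^ K) ^ (p + 1) := by
          exact Nat.pow_le_pow_left (Nat.pow_le_pow_right (by norm_num) (hBcard x)) _
  have hAcard : A.card ≤ Λ.card * (2 ^ K) ^ (p + 1) := by
    refine (Finset.card_le_card hAsub).trans ?_
    refine Finset.card_biUnion_le.trans ?_
    calc ∑ x : {x // x ∈ Λ}, (Finset.univ.filter
          (fun Zv : Fin (p + 1) → Finset {x // x ∈ Λ} => ∀ k, Zv k ⊆ B x)).card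
        ≤ ∑ _x : {x // x ∈ Λ}, (2 ^ K) ^ (p + 1) := Finset.sum_le_sum (fun x _ => hTcard x)
      _ = Fintype.card {x // x ∈ Λ} * (2 ^ K) ^ (p + 1) := by
          rw [Finset.sum_const, smul_eq_mul, Finset.card_univ]
      _ = Λ.card * (2 ^ K) ^ (p + 1) := by rw [Fintype.card_coe]
  -- conclusion
  calc ∑ γvec : Fin (p + 1) → Fin Γ,
        ‖nestedCommutator p (fun i => ∑ Z : Finset {x // x ∈ Λ}, H (γvec i) Z)‖
      ≤ ∑ _γvec : Fin (p + 1) → Fin Γ, (A.card : ℝ) * 2 ^ p :=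
        Finset.sum_le_sum (fun γvec _ => step1 γvec)
    _ = (Fintype.card (Fin (p + 1) → Fin Γ) : ℝ) * ((A.card : ℝ) * 2 ^ p) := by
        rw [Finset.sum_const, nsmul_eq_mul, Finset.card_univ]
    _ ≤ (Fintype.card (Fin (p + 1) → Fin Γ) : ℝ)
        * (((Λ.card * (2 ^ K) ^ (p + 1) : ℕ) : ℝ) * 2 ^ p) := by
        have h0 : (0 : ℝ) ≤ (Fintype.card (Fin (p + 1) → Fin Γ) : ℝ) := Nat.cast_nonneg _
        have h1 : ((A.card : ℕ) : ℝ) ≤ ((Λ.card * (2 ^ K) ^ (p + 1) : ℕ) : ℝ) :=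
          Nat.cast_le.mpr hAcard
        have h2 : (0 : ℝ) ≤ (2 : ℝ) ^ p := by positivity
        gcongr
    _ = (Fintype.card (Fin (p + 1) → Fin Γ) : ℝ) * (((2 ^ K) ^ (p + 1) : ℕ) : ℝ) * 2 ^ p
        * (Λ.card : ℝ) := by
        push_cast
        ring
end NC
end
end

section
/- Let A, B : ℝ → Mₙ(ℂ) be continuous Hermitian-matrix-valued functions and t ≥ 0. Let U, V_A, V_B : ℝ → Mₙ(ℂ) be the unique solutions of U'(s) = −i (A(s) + B(s)) U(s), V_A'(s) = −i A(s) V_A(s), V_B'(s) = −i B(s) V_B(s), each with value I at s = 0. Then ‖U(t) − V_A(t) V_B(t)‖ ≤ ∫₀ᵗ dv ∫₀ᵛ ds ‖[A(s), B(v)]‖. -/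
open scoped Matrix.Norms.L2Operator

noncomputable section

lemma unitary_of_ode {n : ℕ} (H V : ℝ → Matrix (Fin n) (Fin n) ℂ)
    (hHherm : ∀ s, (H s).IsHermitian) (hV0 : V 0 = 1)
    (hV : ∀ s, HasDerivAt V ((-Complex.I) • (H s * V s)) s) :
    ∀ s, V s ∈ unitary (Matrix (Fin n) (Fin n) ℂ) := by
  have hg : ∀ s, HasDerivAt (fun u => star (V u) * V u) 0 s := by
    intro s
    have h := ((hV s).star.mul (hV s))
    convert h using 1
    case e'_4 => rfl
    case e'_5 => rfl
    case e'_6 => rfl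
    case e'_8 => rfl
    have hstar : star ((-Complex.I) • (H s * V s)) = Complex.I • (star (V s) * H s) := by
      rw [star_smul, star_mul]
      simp [Matrix.star_eq_conjTranspose, (hHherm s).eq, Complex.conj_I]
    rw [hstar]
    simp only [smul_mul_assoc, mul_smul_comm, mul_assoc]
    rw [neg_smul, add_neg_cancel]
  have hconst : ∀ s, star (V s) * V s = 1 := by
    intro s
    have := is_const_of_deriv_eq_zero (f := fun u => star (V u) * V u)
      (fun u => (hg u).differentiableAt) (fun u => (hg u).deriv) s 0
    simpa [hV0] using this
  intro s
  exact ⟨hconst s, mul_eq_one_comm.mp (hconst s)⟩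

/-- **First-order Trotter error bound for time-dependent Hamiltonians**:
if `U`, `V_A`, `V_B` are the time-ordered exponentials `Texp(-i∫₀ᵗ(A+B))`,
`Texp(-i∫₀ᵗA)`, `Texp(-i∫₀ᵗB)`, then
`‖U(t) - V_A(t) V_B(t)‖ ≤ ∫₀ᵗ dv ∫₀ᵛ ds ‖[A(s), B(v)]‖`. -/
theorem trotter_first_order_time_dependent {n : ℕ}
    (A B : ℝ → Matrix (Fin n) (Fin n) ℂ)
    (hAcont : Continuous A) (hBcont : Continuous B)
    (hAherm : ∀ s, (A s).IsHermitian) (hBherm : ∀ s, (B s).IsHermitian)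
    (t : ℝ) (ht : 0 ≤ t)
    (U VA VB : ℝ → Matrix (Fin n) (Fin n) ℂ)
    (hU0 : U 0 = 1) (hVA0 : VA 0 = 1) (hVB0 : VB 0 = 1)
    (hU : ∀ s : ℝ, HasDerivAt U ((-Complex.I) • ((A s + B s) * U s)) s)
    (hVA : ∀ s : ℝ, HasDerivAt VA ((-Complex.I) • (A s * VA s)) s)
    (hVB : ∀ s : ℝ, HasDerivAt VB ((-Complex.I) • (B s * VB s)) s) :
    ‖U t - VA t * VB t‖ ≤
      ∫ v in (0:ℝ)..t, ∫ s in (0:ℝ)..v, ‖A s * B v - B v * A s‖ := by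
  set W : ℝ → Matrix (Fin n) (Fin n) ℂ := fun v => VA v * VB v with hWdef
  set C : ℝ → Matrix (Fin n) (Fin n) ℂ := fun v => VA v * B v - B v * VA v with hCdef
  set R : ℝ → Matrix (Fin n) (Fin n) ℂ := fun v => (-Complex.I) • (C v * VB v) with hRdef
  -- unitarity
  have hUun := unitary_of_ode (fun s => A s + B s) U (fun s => (hAherm s).add (hBherm s)) hU0 hU
  have hVAun := unitary_of_ode A VA hAherm hVA0 hVA
  have hVBun := unitary_of_ode B VB hBherm hVB0 hVB
  -- continuity
  have hUc : Continuous U := by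
    have : Differentiable ℝ U := fun s => (hU s).differentiableAt
    exact this.continuous
  have hVAc : Continuous VA := by
    have : Differentiable ℝ VA := fun s => (hVA s).differentiableAt
    exact this.continuous
  have hVBc : Continuous VB := by
    have : Differentiable ℝ VB := fun s => (hVB s).differentiableAt
    exact this.continuous
  have hCc : Continuous C := (hVAc.mul hBcont).sub (hBcont.mul hVAc)
  have hRc : Continuous R := Continuous.smul (f := fun _ => -Complex.I) (g := fun v => C v * VB v) continuous_const (hCc.mul hVBc)
  have hIntegrandc : Continuous (fun v => star (U v) * R v) :=
    (continuous_star.comp hUc).mul hRc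
  -- derivative of W
  have hW : ∀ v, HasDerivAt W ((-Complex.I) • ((A v + B v) * W v) + R v) v := by
    intro v
    have h := (hVA v).mul (hVB v)
    convert h using 1
    case e'_4 => rfl
    case e'_5 => rfl
    case e'_6 => rfl
    case e'_8 => rfl
    simp only [hWdef, hRdef, hCdef, smul_mul_assoc, mul_smul_comm, ← smul_add]
    congr 1
    noncomm_ring
  -- derivative of star U * W
  have hG : ∀ v, HasDerivAt (fun v => star (U v) * W v) (star (U v) * R v) v := by
    intro v
    have h := (hU v).star.mul (hW v)
    have hM : star (A v + B v) = A v + B v := by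
      rw [Matrix.star_eq_conjTranspose]; exact ((hAherm v).add (hBherm v)).eq
    have hstar : star ((-Complex.I) • ((A v + B v) * U v))
        = Complex.I • (star (U v) * (A v + B v)) := by
      rw [star_smul, star_mul, hM]
      simp
    have h2 : star ((-Complex.I) • ((A v + B v) * U v)) * W v
        + star (U v) * ((-Complex.I) • ((A v + B v) * W v) + R v)
        = star (U v) * R v := by
      rw [hstar]
      have h3 : star (U v) * ((-Complex.I) • ((A v + B v) * W v) + R v)
          = -(Complex.I • (star (U v) * ((A v + B v) * W v))) + star (U v) * R v := by
        rw [mul_add, mul_smul_comm, neg_smul]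
      rw [h3, smul_mul_assoc, mul_assoc]
      abel
    exact h2 ▸ h
  -- FTC
  have key : (∫ v in (0:ℝ)..t, star (U v) * R v) = star (U t) * W t - 1 := by
    rw [intervalIntegral.integral_eq_sub_of_hasDerivAt (fun v _ => hG v)
      (hIntegrandc.intervalIntegrable 0 t)]
    simp [hU0, hWdef, hVA0, hVB0]
  -- step: ‖U t - W t‖ = ‖∫ ...‖
  have hnorm1 : ‖U t - W t‖ = ‖∫ v in (0:ℝ)..t, star (U v) * R v‖ := by
    rw [key]
    have h1 : ‖U t - W t‖ = ‖star (U t) * (U t - W t)‖ :=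
      (CStarRing.norm_mem_unitary_mul _ (Unitary.star_mem (hUun t))).symm
    rw [h1, mul_sub, (hUun t).1]
    rw [show (1 : Matrix (Fin n) (Fin n) ℂ) - star (U t) * W t
      = -(star (U t) * W t - 1) by abel, norm_neg]
  -- pointwise bound on ‖R v‖
  have hptwise : ∀ v ∈ Set.Icc (0:ℝ) t,
      ‖star (U v) * R v‖ ≤ ∫ s in (0:ℝ)..v, ‖A s * B v - B v * A s‖ := by
    intro v hv
    set K : ℝ → Matrix (Fin n) (Fin n) ℂ := fun s => star (VA s) * (B v * VA s) with hKdef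
    set D : ℝ → Matrix (Fin n) (Fin n) ℂ :=
      fun s => Complex.I • (star (VA s) * ((A s * B v - B v * A s) * VA s)) with hDdef
    have hK : ∀ s, HasDerivAt K (D s) s := by
      intro s
      have h := (hVA s).star.mul ((hVA s).const_mul (B v))
      have hstar : star ((-Complex.I) • (A s * VA s)) = Complex.I • (star (VA s) * A s) := by
        rw [star_smul, star_mul]
        simp [Matrix.star_eq_conjTranspose, (hAherm s).eq, Complex.conj_I]
      have h2 : star ((-Complex.I) • (A s * VA s)) * (B v * VA s)
          + star (VA s) * (B v * ((-Complex.I) • (A s * VA s))) = D s := by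
        rw [hstar]
        simp only [smul_mul_assoc, mul_smul_comm]
        rw [neg_smul, ← sub_eq_add_neg, ← smul_sub]
        congr 1
        noncomm_ring
      exact h2 ▸ h
    have hDc : Continuous D := by
      apply Continuous.smul (f := fun _ => Complex.I) (g := fun s => star (VA s) * ((A s * B v - B v * A s) * VA s)) continuous_const
      exact (continuous_star.comp hVAc).mul
        (((hAcont.mul continuous_const).sub (continuous_const.mul hAcont)).mul hVAc)
    have hftc : (∫ s in (0:ℝ)..v, D s) = K v - B v := by
      rw [intervalIntegral.integral_eq_sub_of_hasDerivAt (fun s _ => hK s)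
        (hDc.intervalIntegrable 0 v)]
      simp [hKdef, hVA0]
    have hCv : ‖C v‖ = ‖K v - B v‖ := by
      have hCeq : C v = -(VA v * (K v - B v)) := by
        simp only [hCdef, hKdef, mul_sub, ← mul_assoc, (hVAun v).2, one_mul]
        abel
      rw [hCeq, norm_neg, CStarRing.norm_mem_unitary_mul _ (hVAun v)]
    have hRv : ‖star (U v) * R v‖ = ‖C v‖ := by
      rw [CStarRing.norm_mem_unitary_mul _ (Unitary.star_mem (hUun v)), hRdef]
      simp only [norm_smul, norm_neg, Complex.norm_I, one_mul]
      exact CStarRing.norm_mul_mem_unitary _ (hVBun v)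
    have hDnorm : ∀ s, ‖D s‖ = ‖A s * B v - B v * A s‖ := by
      intro s
      rw [hDdef]
      simp only [norm_smul, Complex.norm_I, one_mul]
      rw [CStarRing.norm_mem_unitary_mul _ (Unitary.star_mem (hVAun s))]
      exact CStarRing.norm_mul_mem_unitary _ (hVAun s)
    calc ‖star (U v) * R v‖ = ‖K v - B v‖ := by rw [hRv, hCv]
      _ = ‖∫ s in (0:ℝ)..v, D s‖ := by rw [hftc]
      _ ≤ ∫ s in (0:ℝ)..v, ‖D s‖ := intervalIntegral.norm_integral_le_integral_norm hv.1
      _ = ∫ s in (0:ℝ)..v, ‖A s * B v - B v * A s‖ := by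
          exact intervalIntegral.integral_congr (fun s _ => hDnorm s)
  -- continuity of the outer bound
  have houterc : Continuous (fun v => ∫ s in (0:ℝ)..v, ‖A s * B v - B v * A s‖) := by
    apply intervalIntegral.continuous_parametric_intervalIntegral_of_continuous
      (f := fun v s => ‖A s * B v - B v * A s‖) _ continuous_id
    apply Continuous.norm
    exact ((hAcont.comp continuous_snd).mul (hBcont.comp continuous_fst)).sub
      ((hBcont.comp continuous_fst).mul (hAcont.comp continuous_snd))
  calc ‖U t - VA t * VB t‖ = ‖∫ v in (0:ℝ)..t, star (U v) * R v‖ := hnorm1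
    _ ≤ ∫ v in (0:ℝ)..t, ‖star (U v) * R v‖ :=
        intervalIntegral.norm_integral_le_integral_norm ht
    _ ≤ ∫ v in (0:ℝ)..t, ∫ s in (0:ℝ)..v, ‖A s * B v - B v * A s‖ := by
        apply intervalIntegral.integral_mono_on ht
          (hIntegrandc.norm.intervalIntegrable 0 t)
          (houterc.intervalIntegrable 0 t) hptwise
end
end

section
/- Let H₀, H₁^A, H₁^B be Hermitian n×n complex matrices, α ∈ ℝ, t ≥ 0, N ≥ 1 an integer, H₁ = H₁^A + H₁^B, and H₁^X(s) := e^{isH₀} H₁^X e^{−isH₀} for X ∈ {A, B}. Then ‖ Texp( −iα ∫₀ᵗ H₁(τ) dτ ) − ∏_{j=0}^{N−1} Texp( −iα ∫_{jt/N}^{(j+1)t/N} H₁^A(τ) dτ ) · Texp( −iα ∫_{jt/N}^{(j+1)t/N} H₁^B(τ) dτ ) ‖ ≤ α² Σ_{j=0}^{N−1} ∫_{jt/N}^{(j+1)t/N} dv ∫_{jt/N}^{v} ds ‖[H₁^A(s), H₁^B(v)]‖, where factors with larger j are applied on the left in the product. -/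
open scoped Matrix.Norms.L2Operator

noncomputable section

open Classical in
/-- The time-ordered exponential `Texp(∫_a^b M(s) ds)`: the value at `b` of the (for
continuous `M`, unique) solution `W` of `W'(τ) = M(τ) W(τ)` with `W(a) = 1`. -/
def Texp {n : ℕ} (M : ℝ → Matrix (Fin n) (Fin n) ℂ) (a b : ℝ) :
    Matrix (Fin n) (Fin n) ℂ :=
  if h : ∃ W : ℝ → Matrix (Fin n) (Fin n) ℂ,
      W a = 1 ∧ ∀ τ : ℝ, HasDerivAt W (M τ * W τ) τ
  then h.choose b else 0

open NormedSpace Complex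

namespace ThriftAux

variable {n : ℕ}

/-- `E K s = exp((I s) • K)`. -/
def E (K : Matrix (Fin n) (Fin n) ℂ) (s : ℝ) : Matrix (Fin n) (Fin n) ℂ :=
  exp ((Complex.I * s) • K)

lemma smul_key (K : Matrix (Fin n) (Fin n) ℂ) (u : ℝ) :
    (Complex.I * u) • K = u • (Complex.I • K) := by
  rw [mul_comm, mul_smul, Complex.coe_smul]

lemma E_eq (K : Matrix (Fin n) (Fin n) ℂ) (s : ℝ) :
    E K s = exp (s • (Complex.I • K)) := by
  rw [E, smul_key]

lemma hasDerivAt_E (K : Matrix (Fin n) (Fin n) ℂ) (s : ℝ) :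
    HasDerivAt (E K) (Complex.I • K * E K s) s := by
  have h := hasDerivAt_exp_smul_const' (𝕂 := ℝ) (Complex.I • K) s
  have he : E K = fun u : ℝ => exp (u • (Complex.I • K)) := funext fun u => E_eq K u
  rw [he]
  simpa using h

lemma continuous_E (K : Matrix (Fin n) (Fin n) ℂ) : Continuous (E K) :=
  continuous_iff_continuousAt.2 fun s => (hasDerivAt_E K s).continuousAt

@[simp] lemma E_zero (K : Matrix (Fin n) (Fin n) ℂ) : E K 0 = 1 := by
  simp [E, exp_zero]

lemma E_mul_E (K : Matrix (Fin n) (Fin n) ℂ) (s u : ℝ) :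
    E K s * E K u = E K (s + u) := by
  rw [E, E, E, ← Matrix.exp_add_of_commute _ _ (((Commute.refl K).smul_left _).smul_right _)]
  congr 1
  rw [← add_smul]
  push_cast
  ring_nf

@[simp] lemma E_mul_E_assoc (K : Matrix (Fin n) (Fin n) ℂ) (s u : ℝ)
    (X : Matrix (Fin n) (Fin n) ℂ) : E K s * (E K u * X) = E K (s + u) * X := by
  rw [← mul_assoc, E_mul_E]

@[simp] lemma E_neg_mul (K : Matrix (Fin n) (Fin n) ℂ) (s : ℝ) :
    E K (-s) * E K s = 1 := by rw [E_mul_E]; simp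

@[simp] lemma E_mul_neg (K : Matrix (Fin n) (Fin n) ℂ) (s : ℝ) :
    E K s * E K (-s) = 1 := by rw [E_mul_E]; simp

lemma star_E {K : Matrix (Fin n) (Fin n) ℂ} (hK : K.IsHermitian) (s : ℝ) :
    star (E K s) = E K (-s) := by
  rw [E, E, star_exp]
  congr 1
  rw [Matrix.star_eq_conjTranspose, Matrix.conjTranspose_smul]
  rw [hK.eq]
  congr 1
  simp [Complex.ext_iff]

lemma E_mem_unitary {K : Matrix (Fin n) (Fin n) ℂ} (hK : K.IsHermitian) (s : ℝ) :
    E K s ∈ unitary (Matrix (Fin n) (Fin n) ℂ) := by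
  rw [Unitary.mem_iff, star_E hK]
  exact ⟨E_neg_mul K s, E_mul_neg K s⟩

lemma norm_one_le : ‖(1 : Matrix (Fin n) (Fin n) ℂ)‖ ≤ 1 := by
  have h := CStarRing.norm_star_mul_self (x := (1 : Matrix (Fin n) (Fin n) ℂ))
  simp only [star_one, mul_one] at h
  nlinarith [norm_nonneg (1 : Matrix (Fin n) (Fin n) ℂ)]

lemma norm_unitary_le {U : Matrix (Fin n) (Fin n) ℂ}
    (hU : U ∈ unitary (Matrix (Fin n) (Fin n) ℂ)) : ‖U‖ ≤ 1 := by
  have h := CStarRing.norm_star_mul_self (x := U)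
  rw [(Unitary.mem_iff.mp hU).1] at h
  nlinarith [norm_nonneg U, norm_one_le (n := n)]

lemma norm_mul_le_left {U X : Matrix (Fin n) (Fin n) ℂ}
    (hU : U ∈ unitary (Matrix (Fin n) (Fin n) ℂ)) : ‖U * X‖ ≤ ‖X‖ := by
  exact (norm_mul_le U X).trans (mul_le_of_le_one_left (norm_nonneg X) (norm_unitary_le hU))

lemma norm_mul_le_right {U X : Matrix (Fin n) (Fin n) ℂ}
    (hU : U ∈ unitary (Matrix (Fin n) (Fin n) ℂ)) : ‖X * U‖ ≤ ‖X‖ := by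
  exact (norm_mul_le X U).trans (mul_le_of_le_one_right (norm_nonneg X) (norm_unitary_le hU))

lemma norm_unitary_conj {U V X : Matrix (Fin n) (Fin n) ℂ}
    (hU : U ∈ unitary (Matrix (Fin n) (Fin n) ℂ))
    (hV : V ∈ unitary (Matrix (Fin n) (Fin n) ℂ)) : ‖U * X * V‖ = ‖X‖ := by
  refine le_antisymm ((norm_mul_le_right hV).trans (norm_mul_le_left hU)) ?_
  have hX : star U * (U * X * V) * star V = X := by
    have hU1 := (Unitary.mem_iff.mp hU).1
    have hV2 := (Unitary.mem_iff.mp hV).2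
    calc star U * (U * X * V) * star V = (star U * U) * X * (V * star V) := by noncomm_ring
    _ = X := by rw [hU1, hV2, one_mul, mul_one]
  calc ‖X‖ = ‖star U * (U * X * V) * star V‖ := by rw [hX]
  _ ≤ ‖U * X * V‖ :=
    (norm_mul_le_right (Unitary.star_mem hV)).trans (norm_mul_le_left (Unitary.star_mem hU))

@[simp] lemma E_neg_mul_assoc (K : Matrix (Fin n) (Fin n) ℂ) (s : ℝ)
    (X : Matrix (Fin n) (Fin n) ℂ) : E K (-s) * (E K s * X) = X := by
  rw [← mul_assoc, E_neg_mul, one_mul]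

@[simp] lemma E_mul_neg_assoc (K : Matrix (Fin n) (Fin n) ℂ) (s : ℝ)
    (X : Matrix (Fin n) (Fin n) ℂ) : E K s * (E K (-s) * X) = X := by
  rw [← mul_assoc, E_mul_neg, one_mul]

lemma commute_E {K L : Matrix (Fin n) (Fin n) ℂ} (h : Commute K L) (s : ℝ) :
    Commute (E K s) L := (h.smul_left _).exp_left

lemma hasDerivAt_E_sub (K : Matrix (Fin n) (Fin n) ℂ) (c τ : ℝ) :
    HasDerivAt (fun u => E K (c - u)) (-(Complex.I • K * E K (c - τ))) τ := by
  have hf : HasDerivAt (fun u : ℝ => c - u) (-1) τ := by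
    simpa using (hasDerivAt_id τ).const_sub c
  have := (hasDerivAt_E K (c - τ)).scomp τ hf
  simp at this; rw [smul_mul_assoc]; exact this

lemma hasDerivAt_E_add (K : Matrix (Fin n) (Fin n) ℂ) (c τ : ℝ) :
    HasDerivAt (fun u => E K (u - c)) (Complex.I • K * E K (τ - c)) τ := by
  have hf : HasDerivAt (fun u : ℝ => u - c) 1 τ := by
    simpa using (hasDerivAt_id τ).sub_const c
  have := (hasDerivAt_E K (τ - c)).scomp τ hf
  simp at this; rw [smul_mul_assoc]; exact this

lemma hasDerivAt_E_neg (K : Matrix (Fin n) (Fin n) ℂ) (τ : ℝ) :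
    HasDerivAt (fun u => E K (-u)) (-(Complex.I • K * E K (-τ))) τ := by
  simpa using hasDerivAt_E_sub K 0 τ


lemma pic_eq (H₀ A : Matrix (Fin n) (Fin n) ℂ) (s : ℝ) :
    interactionPicture H₀ A s = E H₀ s * A * E H₀ (-s) := by
  rw [interactionPicture, E, E]
  congr 3
  push_cast
  ring_nf

lemma continuous_pic (H₀ A : Matrix (Fin n) (Fin n) ℂ) :
    Continuous (interactionPicture H₀ A) := by
  simp only [funext (pic_eq H₀ A)]
  exact ((continuous_E H₀).mul continuous_const).mul ((continuous_E H₀).comp continuous_neg)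

/-- If `W` solves the ODE with `W a = 1` and has a (differentiable) pointwise left
inverse `Winv` with the adjoint ODE, then `Texp M a b = W b`. -/
lemma texp_eq {M W Winv : ℝ → Matrix (Fin n) (Fin n) ℂ} {a : ℝ}
    (hW1 : W a = 1) (hW : ∀ τ, HasDerivAt W (M τ * W τ) τ)
    (hinv : ∀ τ, Winv τ * W τ = 1)
    (hWinv : ∀ τ, HasDerivAt Winv (-(Winv τ * M τ)) τ) (b : ℝ) :
    Texp M a b = W b := by
  have hex : ∃ W : ℝ → Matrix (Fin n) (Fin n) ℂ,
      W a = 1 ∧ ∀ τ : ℝ, HasDerivAt W (M τ * W τ) τ := ⟨W, hW1, hW⟩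
  rw [Texp, dif_pos hex]
  obtain ⟨hZ1, hZd⟩ := hex.choose_spec
  set Z := hex.choose with hZ
  have hg : ∀ τ, HasDerivAt (fun τ => Winv τ * Z τ) 0 τ := by
    intro τ
    have h := (hWinv τ).mul (hZd τ)
    refine h.congr_deriv ?_
    rw [neg_mul, mul_assoc, neg_add_cancel]
  have hconst : Winv b * Z b = Winv a * Z a := by
    have h := intervalIntegral.integral_eq_sub_of_hasDerivAt
      (f := fun τ => Winv τ * Z τ) (f' := fun _ => 0) (a := a) (b := b)
      (fun x _ => hg x) (by simp [intervalIntegrable_const])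
    simp only [intervalIntegral.integral_zero] at h
    linear_combination (norm := module) -h
  have hWa : Winv a = 1 := by have := hinv a; rwa [hW1, mul_one] at this
  have hgb : Winv b * Z b = 1 := by rw [hconst, hWa, hZ1, one_mul]
  have hr : W b * Winv b = 1 := mul_eq_one_comm.mp (hinv b)
  calc Z b = (W b * Winv b) * Z b := by rw [hr, one_mul]
  _ = W b * (Winv b * Z b) := by rw [mul_assoc]
  _ = W b := by rw [hgb, mul_one]

variable (H₀ : Matrix (Fin n) (Fin n) ℂ)

def Wsol (K : Matrix (Fin n) (Fin n) ℂ) (a τ : ℝ) : Matrix (Fin n) (Fin n) ℂ :=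
  E H₀ τ * E K (a - τ) * E H₀ (-a)

def Winv (K : Matrix (Fin n) (Fin n) ℂ) (a τ : ℝ) : Matrix (Fin n) (Fin n) ℂ :=
  E H₀ a * E K (τ - a) * E H₀ (-τ)

lemma Winv_mul_Wsol (K : Matrix (Fin n) (Fin n) ℂ) (a τ : ℝ) :
    Winv H₀ K a τ * Wsol H₀ K a τ = 1 := by
  simp [Wsol, Winv, mul_assoc]

lemma Wsol_mul_Winv (K : Matrix (Fin n) (Fin n) ℂ) (a τ : ℝ) :
    Wsol H₀ K a τ * Winv H₀ K a τ = 1 :=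
  mul_eq_one_comm.mp (Winv_mul_Wsol H₀ K a τ)

lemma Wsol_self (K : Matrix (Fin n) (Fin n) ℂ) (a : ℝ) : Wsol H₀ K a a = 1 := by
  simp [Wsol]

lemma continuous_Wsol (K : Matrix (Fin n) (Fin n) ℂ) (a : ℝ) :
    Continuous (Wsol H₀ K a) :=
  (((continuous_E H₀).mul ((continuous_E K).comp (continuous_const.sub continuous_id))).mul
    continuous_const)

lemma continuous_Winv (K : Matrix (Fin n) (Fin n) ℂ) (a : ℝ) :
    Continuous (Winv H₀ K a) :=
  ((continuous_const.mul ((continuous_E K).comp (continuous_id.sub continuous_const))).mul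
    ((continuous_E H₀).comp continuous_neg))

lemma Wsol_mem_unitary {K : Matrix (Fin n) (Fin n) ℂ} (hH₀ : H₀.IsHermitian)
    (hK : K.IsHermitian) (a τ : ℝ) :
    Wsol H₀ K a τ ∈ unitary (Matrix (Fin n) (Fin n) ℂ) :=
  mul_mem (mul_mem (E_mem_unitary hH₀ _) (E_mem_unitary hK _)) (E_mem_unitary hH₀ _)

lemma Winv_mem_unitary {K : Matrix (Fin n) (Fin n) ℂ} (hH₀ : H₀.IsHermitian)
    (hK : K.IsHermitian) (a τ : ℝ) :
    Winv H₀ K a τ ∈ unitary (Matrix (Fin n) (Fin n) ℂ) :=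
  mul_mem (mul_mem (E_mem_unitary hH₀ _) (E_mem_unitary hK _)) (E_mem_unitary hH₀ _)

lemma hasDerivAt_Wsol (H : Matrix (Fin n) (Fin n) ℂ) (α : ℝ) (a τ : ℝ) :
    HasDerivAt (Wsol H₀ (H₀ + (α : ℂ) • H) a)
      ((-(Complex.I * α)) • interactionPicture H₀ H τ * Wsol H₀ (H₀ + (α : ℂ) • H) a τ) τ := by
  set K := H₀ + (α : ℂ) • H with hK
  have h := ((hasDerivAt_E H₀ τ).mul (hasDerivAt_E_sub K a τ)).mul_const (E H₀ (-a))
  refine h.congr_deriv ?_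
  have hc2 : H₀ * E H₀ τ = E H₀ τ * H₀ := (commute_E (Commute.refl H₀) τ).symm
  rw [pic_eq, Wsol, hK]
  simp only [add_mul, mul_add, smul_add, smul_smul, mul_assoc, smul_mul_assoc,
    mul_smul_comm, neg_mul, mul_neg, neg_smul, add_smul, E_neg_mul_assoc]
  rw [show H₀ * (E H₀ τ * (E K (a - τ) * E H₀ (-a)))
      = E H₀ τ * (H₀ * (E K (a - τ) * E H₀ (-a))) from by
    rw [← mul_assoc, hc2, mul_assoc]]
  module

lemma hasDerivAt_Winv (H : Matrix (Fin n) (Fin n) ℂ) (α : ℝ) (a τ : ℝ) :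
    HasDerivAt (Winv H₀ (H₀ + (α : ℂ) • H) a)
      (-(Winv H₀ (H₀ + (α : ℂ) • H) a τ *
        ((-(Complex.I * α)) • interactionPicture H₀ H τ))) τ := by
  set K := H₀ + (α : ℂ) • H with hK
  have h := (((hasDerivAt_const τ (E H₀ a)).mul (hasDerivAt_E_add K a τ)).mul
    (hasDerivAt_E_neg H₀ τ))
  refine h.congr_deriv ?_
  simp only [Pi.mul_apply]
  have hc2 : K * E K (τ - a) = E K (τ - a) * K := (commute_E (Commute.refl K) _).symm
  rw [pic_eq, Winv]
  simp only [zero_mul, zero_add, add_mul, mul_add, smul_add, smul_smul, mul_assoc,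
    smul_mul_assoc, mul_smul_comm, neg_mul, mul_neg, neg_smul, add_smul, neg_neg,
    E_neg_mul_assoc, E_mul_neg_assoc]
  rw [show K * (E K (τ - a) * E H₀ (-τ)) = E K (τ - a) * (K * E H₀ (-τ)) from by
    rw [← mul_assoc, hc2, mul_assoc]]
  rw [hK]
  simp only [add_mul, mul_add, smul_add, smul_smul, smul_mul_assoc, mul_smul_comm]
  module

lemma texp_eq_Wsol (H : Matrix (Fin n) (Fin n) ℂ) (α : ℝ) (a b : ℝ) :
    Texp (fun τ => (-(Complex.I * α)) • interactionPicture H₀ H τ) a b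
      = Wsol H₀ (H₀ + (α : ℂ) • H) a b :=
  texp_eq (Wsol_self H₀ _ a) (fun τ => hasDerivAt_Wsol H₀ H α a τ)
    (fun τ => Winv_mul_Wsol H₀ _ a τ) (fun τ => hasDerivAt_Winv H₀ H α a τ) b

lemma Winv_self (K : Matrix (Fin n) (Fin n) ℂ) (a : ℝ) : Winv H₀ K a a = 1 := by
  simp [Winv]

lemma Winv_mul_Wsol_assoc (K : Matrix (Fin n) (Fin n) ℂ) (a τ : ℝ)
    (X : Matrix (Fin n) (Fin n) ℂ) :
    Winv H₀ K a τ * (Wsol H₀ K a τ * X) = X := by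
  rw [← mul_assoc, Winv_mul_Wsol, one_mul]

lemma Wsol_mul_Winv_assoc (K : Matrix (Fin n) (Fin n) ℂ) (a τ : ℝ)
    (X : Matrix (Fin n) (Fin n) ℂ) :
    Wsol H₀ K a τ * (Winv H₀ K a τ * X) = X := by
  rw [← mul_assoc, Wsol_mul_Winv, one_mul]

lemma herm_comb {H₀ H : Matrix (Fin n) (Fin n) ℂ} (hH₀ : H₀.IsHermitian)
    (hH : H.IsHermitian) (α : ℝ) : (H₀ + (α : ℂ) • H).IsHermitian := by
  refine hH₀.add ?_
  unfold Matrix.IsHermitian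
  rw [Matrix.conjTranspose_smul, hH.eq]
  norm_num

/-- Key pointwise commutator bound. -/
lemma D_bound {H₀ HA HB : Matrix (Fin n) (Fin n) ℂ} (hH₀ : H₀.IsHermitian)
    (hHA : HA.IsHermitian) (hHB : HB.IsHermitian) (α : ℝ) {a v : ℝ} (hav : a ≤ v) :
    ‖Wsol H₀ (H₀ + (α : ℂ) • HA) a v *
        ((-(Complex.I * α)) • interactionPicture H₀ HB v) *
        Winv H₀ (H₀ + (α : ℂ) • HA) a v -
      (-(Complex.I * α)) • interactionPicture H₀ HB v‖ ≤
      ∫ s in a..v, α ^ 2 *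
        ‖interactionPicture H₀ HA s * interactionPicture H₀ HB v -
          interactionPicture H₀ HB v * interactionPicture H₀ HA s‖ := by
  have hKAh : (H₀ + (α : ℂ) • HA).IsHermitian := herm_comb hH₀ hHA α
  set KA := H₀ + (α : ℂ) • HA with hKA
  set C := (-(Complex.I * α)) • interactionPicture H₀ HB v with hC
  set g := fun s => Winv H₀ KA a s * C * Wsol H₀ KA a s with hg
  have hg' : ∀ s, HasDerivAt g
      (Winv H₀ KA a s * ((C * ((-(Complex.I * α)) • interactionPicture H₀ HA s) -
        ((-(Complex.I * α)) • interactionPicture H₀ HA s) * C) * Wsol H₀ KA a s)) s := by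
    intro s
    have h := ((hasDerivAt_Winv H₀ HA α a s).mul_const C).mul (hasDerivAt_Wsol H₀ HA α a s)
    rw [← hKA] at h
    refine h.congr_deriv ?_
    noncomm_ring
  have hgc : Continuous fun s => Winv H₀ KA a s *
      ((C * ((-(Complex.I * α)) • interactionPicture H₀ HA s) -
        ((-(Complex.I * α)) • interactionPicture H₀ HA s) * C) * Wsol H₀ KA a s) := by
    have hMAc : Continuous fun s => (-(Complex.I * α)) • interactionPicture H₀ HA s :=
      (continuous_pic H₀ HA).const_smul (-(Complex.I * α))
    exact (continuous_Winv H₀ KA a).mul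
      (((continuous_const.mul hMAc).sub (hMAc.mul continuous_const)).mul
        (continuous_Wsol H₀ KA a))
  have hfund : g a - g v = -∫ s in a..v,
      Winv H₀ KA a s * ((C * ((-(Complex.I * α)) • interactionPicture H₀ HA s) -
        ((-(Complex.I * α)) • interactionPicture H₀ HA s) * C) * Wsol H₀ KA a s) := by
    rw [intervalIntegral.integral_eq_sub_of_hasDerivAt (fun s _ => hg' s)
      (hgc.intervalIntegrable a v)]
    abel
  have hDrepr : Wsol H₀ KA a v * C * Winv H₀ KA a v - C
      = Wsol H₀ KA a v * ((g a - g v) * Winv H₀ KA a v) := by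
    have hga : g a = C := by simp [hg, Winv_self, Wsol_self]
    rw [hga, hg]
    simp only [sub_mul, mul_sub, mul_assoc, Winv_mul_Wsol_assoc, Wsol_mul_Winv_assoc,
      Wsol_mul_Winv, mul_one]
  rw [hDrepr]
  have hWu := Wsol_mem_unitary H₀ hH₀ hKAh (a := a) (τ := v)
  have hWiu := Winv_mem_unitary H₀ hH₀ hKAh (a := a) (τ := v)
  rw [show Wsol H₀ KA a v * ((g a - g v) * Winv H₀ KA a v)
      = Wsol H₀ KA a v * (g a - g v) * Winv H₀ KA a v from by rw [mul_assoc]]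
  rw [norm_unitary_conj hWu hWiu, hfund, norm_neg]
  refine (intervalIntegral.norm_integral_le_integral_norm hav).trans ?_
  refine le_of_eq (intervalIntegral.integral_congr fun s _ => ?_)
  rw [show Winv H₀ KA a s * ((C * ((-(Complex.I * α)) • interactionPicture H₀ HA s) -
        ((-(Complex.I * α)) • interactionPicture H₀ HA s) * C) * Wsol H₀ KA a s)
      = Winv H₀ KA a s * (C * ((-(Complex.I * α)) • interactionPicture H₀ HA s) -
        ((-(Complex.I * α)) • interactionPicture H₀ HA s) * C) * Wsol H₀ KA a s from by
    rw [mul_assoc]]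
  rw [norm_unitary_conj (Winv_mem_unitary H₀ hH₀ hKAh a s) (Wsol_mem_unitary H₀ hH₀ hKAh a s)]
  have hcc : (-(Complex.I * α)) * (-(Complex.I * α)) = -((α : ℂ) ^ 2) := by
    have := Complex.I_sq
    ring_nf
    ring_nf at this
    rw [this]
    ring
  have hkey : C * ((-(Complex.I * α)) • interactionPicture H₀ HA s) -
        ((-(Complex.I * α)) • interactionPicture H₀ HA s) * C
      = ((α : ℂ) ^ 2) • (interactionPicture H₀ HA s * interactionPicture H₀ HB v -
          interactionPicture H₀ HB v * interactionPicture H₀ HA s) := by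
    rw [hC, smul_mul_assoc, smul_mul_assoc, mul_smul_comm, mul_smul_comm, smul_smul,
      smul_smul, hcc, neg_smul, neg_smul, smul_sub]
    abel
  rw [hkey, norm_smul]
  simp [norm_pow, Complex.norm_real, sq_abs]

lemma pic_add (H₀ X Y : Matrix (Fin n) (Fin n) ℂ) (s : ℝ) :
    interactionPicture H₀ (X + Y) s
      = interactionPicture H₀ X s + interactionPicture H₀ Y s := by
  simp [interactionPicture, mul_add, add_mul]

/-- The single-slice Trotter error bound. -/
lemma slice_bound {H₀ HA HB : Matrix (Fin n) (Fin n) ℂ} (hH₀ : H₀.IsHermitian)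
    (hHA : HA.IsHermitian) (hHB : HB.IsHermitian) (α : ℝ) {a b : ℝ} (hab : a ≤ b) :
    ‖Texp (fun τ => (-(Complex.I * α)) •
        (interactionPicture H₀ HA τ + interactionPicture H₀ HB τ)) a b -
      Texp (fun τ => (-(Complex.I * α)) • interactionPicture H₀ HA τ) a b *
      Texp (fun τ => (-(Complex.I * α)) • interactionPicture H₀ HB τ) a b‖ ≤
      α ^ 2 * ∫ v in a..b, ∫ s in a..v,
        ‖interactionPicture H₀ HA s * interactionPicture H₀ HB v -
          interactionPicture H₀ HB v * interactionPicture H₀ HA s‖ := by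
  have hKh : (H₀ + (α : ℂ) • (HA + HB)).IsHermitian := herm_comb hH₀ (hHA.add hHB) α
  have hKAh : (H₀ + (α : ℂ) • HA).IsHermitian := herm_comb hH₀ hHA α
  have hKBh : (H₀ + (α : ℂ) • HB).IsHermitian := herm_comb hH₀ hHB α
  have h1 : Texp (fun τ => (-(Complex.I * α)) •
      (interactionPicture H₀ HA τ + interactionPicture H₀ HB τ)) a b
      = Wsol H₀ (H₀ + (α : ℂ) • (HA + HB)) a b := by
    have hMfun : (fun τ => (-(Complex.I * α)) •
        (interactionPicture H₀ HA τ + interactionPicture H₀ HB τ))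
        = fun τ => (-(Complex.I * α)) • interactionPicture H₀ (HA + HB) τ := by
      funext τ
      rw [pic_add]
    rw [hMfun, texp_eq_Wsol H₀ (HA + HB) α a b]
  rw [h1, texp_eq_Wsol H₀ HA, texp_eq_Wsol H₀ HB]
  set K := H₀ + (α : ℂ) • (HA + HB) with hK
  set KA := H₀ + (α : ℂ) • HA with hKA
  set KB := H₀ + (α : ℂ) • HB with hKB
  set G := fun τ => Winv H₀ K a τ * (Wsol H₀ KA a τ * Wsol H₀ KB a τ) with hGdef
  set D := fun v => Wsol H₀ KA a v * ((-(Complex.I * α)) • interactionPicture H₀ HB v) *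
      Winv H₀ KA a v - (-(Complex.I * α)) • interactionPicture H₀ HB v with hDdef
  have hG : ∀ τ, HasDerivAt G
      (Winv H₀ K a τ * (D τ * (Wsol H₀ KA a τ * Wsol H₀ KB a τ))) τ := by
    intro τ
    have h := (hasDerivAt_Winv H₀ (HA + HB) α a τ).mul
      ((hasDerivAt_Wsol H₀ HA α a τ).mul (hasDerivAt_Wsol H₀ HB α a τ))
    rw [← hK, ← hKA, ← hKB] at h
    refine h.congr_deriv ?_
    simp only [Pi.mul_apply]
    rw [hDdef]
    have hDexp : (Wsol H₀ KA a τ * ((-(Complex.I * α)) • interactionPicture H₀ HB τ) *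
          Winv H₀ KA a τ - (-(Complex.I * α)) • interactionPicture H₀ HB τ) *
          (Wsol H₀ KA a τ * Wsol H₀ KB a τ)
        = Wsol H₀ KA a τ * (((-(Complex.I * α)) • interactionPicture H₀ HB τ) *
            Wsol H₀ KB a τ) -
          ((-(Complex.I * α)) • interactionPicture H₀ HB τ) *
            (Wsol H₀ KA a τ * Wsol H₀ KB a τ) := by
      simp only [sub_mul, mul_assoc, Winv_mul_Wsol_assoc]
    rw [hDexp, pic_add, smul_add]
    noncomm_ring
  have hDc : Continuous D := by
    have hMBc : Continuous fun v => (-(Complex.I * α)) • interactionPicture H₀ HB v :=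
      (continuous_pic H₀ HB).const_smul (-(Complex.I * α))
    exact (((continuous_Wsol H₀ KA a).mul hMBc).mul (continuous_Winv H₀ KA a)).sub hMBc
  have hGdc : Continuous fun τ =>
      Winv H₀ K a τ * (D τ * (Wsol H₀ KA a τ * Wsol H₀ KB a τ)) :=
    (continuous_Winv H₀ K a).mul
      (hDc.mul ((continuous_Wsol H₀ KA a).mul (continuous_Wsol H₀ KB a)))
  have hfund : G a - G b = -∫ τ in a..b,
      Winv H₀ K a τ * (D τ * (Wsol H₀ KA a τ * Wsol H₀ KB a τ)) := by
    rw [intervalIntegral.integral_eq_sub_of_hasDerivAt (fun τ _ => hG τ)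
      (hGdc.intervalIntegrable a b)]
    abel
  have hGa : G a = 1 := by simp [hGdef, Winv_self, Wsol_self]
  have hrepr : Wsol H₀ K a b - Wsol H₀ KA a b * Wsol H₀ KB a b
      = Wsol H₀ K a b * (G a - G b) := by
    rw [hGa, hGdef, mul_sub, mul_one, Wsol_mul_Winv_assoc]
  rw [hrepr]
  calc ‖Wsol H₀ K a b * (G a - G b)‖ ≤ ‖G a - G b‖ :=
        norm_mul_le_left (Wsol_mem_unitary H₀ hH₀ hKh a b)
  _ = ‖∫ τ in a..b, Winv H₀ K a τ * (D τ * (Wsol H₀ KA a τ * Wsol H₀ KB a τ))‖ := by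
        rw [hfund, norm_neg]
  _ ≤ ∫ τ in a..b, ‖Winv H₀ K a τ * (D τ * (Wsol H₀ KA a τ * Wsol H₀ KB a τ))‖ :=
        intervalIntegral.norm_integral_le_integral_norm hab
  _ = ∫ τ in a..b, ‖D τ‖ := by
        refine intervalIntegral.integral_congr fun τ _ => ?_
        rw [show Winv H₀ K a τ * (D τ * (Wsol H₀ KA a τ * Wsol H₀ KB a τ))
            = Winv H₀ K a τ * D τ * (Wsol H₀ KA a τ * Wsol H₀ KB a τ) from by rw [mul_assoc]]
        exact norm_unitary_conj (Winv_mem_unitary H₀ hH₀ hKh a τ)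
          (mul_mem (Wsol_mem_unitary H₀ hH₀ hKAh a τ) (Wsol_mem_unitary H₀ hH₀ hKBh a τ))
  _ ≤ ∫ v in a..b, ∫ s in a..v, α ^ 2 *
        ‖interactionPicture H₀ HA s * interactionPicture H₀ HB v -
          interactionPicture H₀ HB v * interactionPicture H₀ HA s‖ := by
        refine intervalIntegral.integral_mono_on hab (hDc.norm.intervalIntegrable a b) ?_
          fun v hv => D_bound hH₀ hHA hHB α hv.1
        have hcont : Continuous fun v : ℝ => ∫ s in a..v, α ^ 2 *
            ‖interactionPicture H₀ HA s * interactionPicture H₀ HB v -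
              interactionPicture H₀ HB v * interactionPicture H₀ HA s‖ := by
          apply intervalIntegral.continuous_parametric_intervalIntegral_of_continuous
            (f := fun v s => α ^ 2 *
              ‖interactionPicture H₀ HA s * interactionPicture H₀ HB v -
                interactionPicture H₀ HB v * interactionPicture H₀ HA s‖)
            ?_ continuous_id
          apply Continuous.mul continuous_const
          apply Continuous.norm
          exact (((continuous_pic H₀ HA).comp continuous_snd).mul
              ((continuous_pic H₀ HB).comp continuous_fst)).sub
            (((continuous_pic H₀ HB).comp continuous_fst).mul
              ((continuous_pic H₀ HA).comp continuous_snd))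
        exact hcont.intervalIntegrable a b
  _ = α ^ 2 * ∫ v in a..b, ∫ s in a..v,
        ‖interactionPicture H₀ HA s * interactionPicture H₀ HB v -
          interactionPicture H₀ HB v * interactionPicture H₀ HA s‖ := by
        rw [← intervalIntegral.integral_const_mul]
        refine intervalIntegral.integral_congr fun v _ => ?_
        rw [← intervalIntegral.integral_const_mul]

lemma reverse_ofFn_succ_prod {N : ℕ} (f : Fin (N + 1) → Matrix (Fin n) (Fin n) ℂ) :
    (List.ofFn f).reverse.prod
      = f (Fin.last N) * (List.ofFn fun i : Fin N => f i.castSucc).reverse.prod := by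
  rw [List.ofFn_succ', List.concat_eq_append, List.reverse_append]
  simp

lemma norm_prod_le_one (f : ℕ → Matrix (Fin n) (Fin n) ℂ) (N : ℕ)
    (hf : ∀ j, ‖f j‖ ≤ 1) :
    ‖((List.ofFn fun j : Fin N => f j).reverse).prod‖ ≤ 1 := by
  induction N with
  | zero => simpa using norm_one_le
  | succ m ih =>
    rw [reverse_ofFn_succ_prod]
    simp only [Fin.coe_castSucc, Fin.val_last]
    calc ‖f m * (List.ofFn fun j : Fin m => f j).reverse.prod‖
        ≤ ‖f m‖ * ‖(List.ofFn fun j : Fin m => f j).reverse.prod‖ := norm_mul_le _ _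
    _ ≤ 1 := by
        nlinarith [hf m, ih, norm_nonneg (f m),
          norm_nonneg ((List.ofFn fun j : Fin m => f j).reverse.prod)]

lemma prod_diff_le (f g : ℕ → Matrix (Fin n) (Fin n) ℂ) (N : ℕ)
    (hf : ∀ j, ‖f j‖ ≤ 1) (hg : ∀ j, ‖g j‖ ≤ 1) :
    ‖((List.ofFn fun j : Fin N => f j).reverse).prod -
        ((List.ofFn fun j : Fin N => g j).reverse).prod‖
      ≤ ∑ j ∈ Finset.range N, ‖f j - g j‖ := by
  induction N with
  | zero => simp
  | succ m ih =>
    rw [reverse_ofFn_succ_prod, reverse_ofFn_succ_prod, Finset.sum_range_succ]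
    simp only [Fin.coe_castSucc, Fin.val_last]
    set Pf := (List.ofFn fun j : Fin m => f j).reverse.prod with hPf
    set Pg := (List.ofFn fun j : Fin m => g j).reverse.prod with hPg
    have hkey : f m * Pf - g m * Pg = (f m - g m) * Pf + g m * (Pf - Pg) := by noncomm_ring
    have h1 : ‖(f m - g m) * Pf‖ ≤ ‖f m - g m‖ := by
      refine (norm_mul_le _ _).trans (mul_le_of_le_one_right (norm_nonneg _) ?_)
      rw [hPf]; exact norm_prod_le_one f m hf
    have h2 : ‖g m * (Pf - Pg)‖ ≤ ‖Pf - Pg‖ :=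
      (norm_mul_le _ _).trans (mul_le_of_le_one_left (norm_nonneg _) (hg m))
    calc ‖f m * Pf - g m * Pg‖ = ‖(f m - g m) * Pf + g m * (Pf - Pg)‖ := by rw [hkey]
    _ ≤ ‖(f m - g m) * Pf‖ + ‖g m * (Pf - Pg)‖ := norm_add_le _ _
    _ ≤ ‖f m - g m‖ + ∑ j ∈ Finset.range m, ‖f j - g j‖ := by
        have := ih
        linarith
    _ = ∑ j ∈ Finset.range m, ‖f j - g j‖ + ‖f m - g m‖ := by ring

lemma prod_Wsol (K : Matrix (Fin n) (Fin n) ℂ) (c : ℕ → ℝ) (hc0 : c 0 = 0) (N : ℕ) :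
    ((List.ofFn fun j : Fin N => Wsol H₀ K (c j) (c (j + 1))).reverse).prod
      = E H₀ (c N) * E K (-(c N)) := by
  induction N with
  | zero => simp [hc0]
  | succ m ih =>
    rw [reverse_ofFn_succ_prod]
    simp only [Fin.coe_castSucc, Fin.val_last]
    rw [ih]
    rw [Wsol]
    simp only [mul_assoc, E_mul_E_assoc, neg_add_cancel, E_zero, one_mul, E_mul_E]
    congr 2
    ring

end ThriftAux

open ThriftAux in
/-- **Sliced first-order THRIFT/Trotter error bound in the interaction picture**:
with `H₁ = H₁^A + H₁^B` and `H₁^X(s) = e^{isH₀} H₁^X e^{-isH₀}`,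
`‖Texp(-iα∫₀ᵗH₁) - ∏_{j=0}^{N-1} Texp(-iα∫_{jt/N}^{(j+1)t/N}H₁^A)·Texp(-iα∫_{jt/N}^{(j+1)t/N}H₁^B)‖
  ≤ α² Σ_j ∫∫ ‖[H₁^A(s), H₁^B(v)]‖` (factors with larger `j` on the left). -/
theorem thrift_sliced_error_bound {n : ℕ}
    (H₀ H₁A H₁B : Matrix (Fin n) (Fin n) ℂ)
    (hH₀ : H₀.IsHermitian) (hH₁A : H₁A.IsHermitian) (hH₁B : H₁B.IsHermitian)
    (α t : ℝ) (ht : 0 ≤ t) (N : ℕ) (hN : 1 ≤ N) :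
    ‖Texp (fun τ => (-(Complex.I * α)) •
          (interactionPicture H₀ H₁A τ + interactionPicture H₀ H₁B τ)) 0 t -
        ((List.ofFn fun j : Fin N =>
          Texp (fun τ => (-(Complex.I * α)) • interactionPicture H₀ H₁A τ)
              ((j : ℕ) * t / N) (((j : ℕ) + 1) * t / N) *
            Texp (fun τ => (-(Complex.I * α)) • interactionPicture H₀ H₁B τ)
              ((j : ℕ) * t / N) (((j : ℕ) + 1) * t / N)).reverse).prod‖ ≤
      α ^ 2 * ∑ j ∈ Finset.range N,
        ∫ v in ((j : ℝ) * t / N)..(((j : ℝ) + 1) * t / N),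
          ∫ s in ((j : ℝ) * t / N)..v,
            ‖interactionPicture H₀ H₁A s * interactionPicture H₀ H₁B v -
              interactionPicture H₀ H₁B v * interactionPicture H₀ H₁A s‖ := by
  have hNpos : (0 : ℝ) < (N : ℝ) := by exact_mod_cast Nat.pos_of_ne_zero (by omega)
  have hcast : ∀ j : ℕ, ((j + 1 : ℕ) : ℝ) * t / N = ((j : ℝ) + 1) * t / N := by
    intro j; push_cast; ring
  have hmono : ∀ j : ℕ, (j : ℝ) * t / N ≤ ((j : ℝ) + 1) * t / N := by
    intro j
    have : (j : ℝ) * t ≤ ((j : ℝ) + 1) * t := by nlinarith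
    exact div_le_div_of_nonneg_right this hNpos.le
  have hKh : (H₀ + (α : ℂ) • (H₁A + H₁B)).IsHermitian := herm_comb hH₀ (hH₁A.add hH₁B) α
  have hKAh : (H₀ + (α : ℂ) • H₁A).IsHermitian := herm_comb hH₀ hH₁A α
  have hKBh : (H₀ + (α : ℂ) • H₁B).IsHermitian := herm_comb hH₀ hH₁B α
  set f : ℕ → Matrix (Fin n) (Fin n) ℂ := fun j =>
    Wsol H₀ (H₀ + (α : ℂ) • (H₁A + H₁B)) ((j : ℝ) * t / N) (((j : ℝ) + 1) * t / N)
    with hf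
  set g : ℕ → Matrix (Fin n) (Fin n) ℂ := fun j =>
    Wsol H₀ (H₀ + (α : ℂ) • H₁A) ((j : ℝ) * t / N) (((j : ℝ) + 1) * t / N) *
      Wsol H₀ (H₀ + (α : ℂ) • H₁B) ((j : ℝ) * t / N) (((j : ℝ) + 1) * t / N) with hg
  have hMfun : (fun τ => (-(Complex.I * α)) •
      (interactionPicture H₀ H₁A τ + interactionPicture H₀ H₁B τ))
      = fun τ => (-(Complex.I * α)) • interactionPicture H₀ (H₁A + H₁B) τ :=
    funext fun τ => by rw [pic_add]
  have hlist : (fun j : Fin N =>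
      Texp (fun τ => (-(Complex.I * α)) • interactionPicture H₀ H₁A τ)
          ((j : ℕ) * t / N) (((j : ℕ) + 1) * t / N) *
        Texp (fun τ => (-(Complex.I * α)) • interactionPicture H₀ H₁B τ)
          ((j : ℕ) * t / N) (((j : ℕ) + 1) * t / N))
      = fun j : Fin N => g (j : ℕ) := by
    funext j
    rw [texp_eq_Wsol H₀ H₁A α, texp_eq_Wsol H₀ H₁B α, hg]
  have hW0 : Wsol H₀ (H₀ + (α : ℂ) • (H₁A + H₁B)) 0 t
      = E H₀ t * E (H₀ + (α : ℂ) • (H₁A + H₁B)) (-t) := by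
    simp [Wsol]
  have hprodf : ((List.ofFn fun j : Fin N => f (j : ℕ)).reverse).prod
      = E H₀ t * E (H₀ + (α : ℂ) • (H₁A + H₁B)) (-t) := by
    have h := prod_Wsol H₀ (H₀ + (α : ℂ) • (H₁A + H₁B))
      (fun j => (j : ℝ) * t / N) (by simp) N
    simp only [hcast] at h
    rw [show ((N : ℝ) * t / N : ℝ) = t from by field_simp] at h
    exact h
  rw [hMfun, texp_eq_Wsol H₀ (H₁A + H₁B) α 0 t, hW0, ← hprodf, hlist]
  have hf1 : ∀ j, ‖f j‖ ≤ 1 := fun j =>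
    norm_unitary_le (Wsol_mem_unitary H₀ hH₀ hKh _ _)
  have hg1 : ∀ j, ‖g j‖ ≤ 1 := fun j =>
    norm_unitary_le (mul_mem (Wsol_mem_unitary H₀ hH₀ hKAh _ _)
      (Wsol_mem_unitary H₀ hH₀ hKBh _ _))
  refine (prod_diff_le f g N hf1 hg1).trans ?_
  have hslice : ∀ j : ℕ, ‖f j - g j‖ ≤
      α ^ 2 * ∫ v in ((j : ℝ) * t / N)..(((j : ℝ) + 1) * t / N),
        ∫ s in ((j : ℝ) * t / N)..v,
          ‖interactionPicture H₀ H₁A s * interactionPicture H₀ H₁B v -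
            interactionPicture H₀ H₁B v * interactionPicture H₀ H₁A s‖ := by
    intro j
    have h := slice_bound hH₀ hH₁A hH₁B α
      (a := (j : ℝ) * t / N) (b := ((j : ℝ) + 1) * t / N)
      (hmono j)
    rw [hMfun, texp_eq_Wsol H₀ (H₁A + H₁B) α, texp_eq_Wsol H₀ H₁A α,
      texp_eq_Wsol H₀ H₁B α] at h
    exact h
  calc ∑ j ∈ Finset.range N, ‖f j - g j‖
      ≤ ∑ j ∈ Finset.range N, α ^ 2 *
        ∫ v in ((j : ℝ) * t / N)..(((j : ℝ) + 1) * t / N),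
          ∫ s in ((j : ℝ) * t / N)..v,
            ‖interactionPicture H₀ H₁A s * interactionPicture H₀ H₁B v -
              interactionPicture H₀ H₁B v * interactionPicture H₀ H₁A s‖ :=
        Finset.sum_le_sum fun j _ => hslice j
  _ = α ^ 2 * ∑ j ∈ Finset.range N,
        ∫ v in ((j : ℝ) * t / N)..(((j : ℝ) + 1) * t / N),
          ∫ s in ((j : ℝ) * t / N)..v,
            ‖interactionPicture H₀ H₁A s * interactionPicture H₀ H₁B v -
              interactionPicture H₀ H₁B v * interactionPicture H₀ H₁A s‖ := by
      rw [Finset.mul_sum]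
end
end

section
/- Let H₀, H₁^A, H₁^B : ℝ → Mₙ(ℂ) be continuous Hermitian-matrix-valued functions, α ∈ ℝ, t ≥ 0, and set H(s) = H₀(s) + α (H₁^A(s) + H₁^B(s)). Let U, U₀ : ℝ → Mₙ(ℂ) be the unique solutions of U'(s) = −i H(s) U(s) and U₀'(s) = −i H₀(s) U₀(s) with U(0) = U₀(0) = I; define H̃₁^X(s) := U₀(s)^{−1} H₁^X(s) U₀(s) for X ∈ {A, B}, and let V_A, V_B solve V_X'(s) = −i α H̃₁^X(s) V_X(s) with V_X(0) = I. Then the approximant U_apx(t) := U₀(t) V_A(t) V_B(t) satisfies ‖U(t) − U_apx(t)‖ ≤ α² ∫₀ᵗ dv ∫₀ᵛ ds ‖[H̃₁^A(s), H̃₁^B(v)]‖. -/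
open scoped Matrix.Norms.L2Operator

noncomputable section

namespace ThriftTD

variable {n : ℕ}

local notation "Mn" => Matrix (Fin n) (Fin n) ℂ

lemma norm_unitary_mul (u x : Mn) (h : star u * u = 1) : ‖u * x‖ = ‖x‖ := by
  have h2 : ‖u * x‖ * ‖u * x‖ = ‖x‖ * ‖x‖ := by
    rw [← CStarRing.norm_star_mul_self, ← CStarRing.norm_star_mul_self (x := x)]
    congr 1
    rw [star_mul]
    calc star x * star u * (u * x) = star x * (star u * u) * x := by noncomm_ring
    _ = star x * x := by rw [h, mul_one]
  exact mul_self_inj (norm_nonneg _) (norm_nonneg _) |>.mp h2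

lemma norm_mul_unitary (x u : Mn) (h : u * star u = 1) : ‖x * u‖ = ‖x‖ := by
  have h2 : ‖x * u‖ * ‖x * u‖ = ‖x‖ * ‖x‖ := by
    rw [← CStarRing.norm_self_mul_star, ← CStarRing.norm_self_mul_star (x := x)]
    congr 1
    rw [star_mul]
    calc x * u * (star u * star x) = x * (u * star u) * star x := by noncomm_ring
    _ = x * star x := by rw [h, mul_one]
  exact mul_self_inj (norm_nonneg _) (norm_nonneg _) |>.mp h2

lemma unitary_of_ode (z : ℂ) (hz : star z = -z) (K P : ℝ → Mn)
    (hK : ∀ s, star (K s) = K s) (hP0 : P 0 = 1)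
    (hP : ∀ s, HasDerivAt P (z • (K s * P s)) s) : ∀ s, star (P s) * P s = 1 := by
  have hF : ∀ s, HasDerivAt (fun s => star (P s) * P s) 0 s := by
    intro s
    have h := (hP s).star.mul (hP s)
    convert h using 1
    case e'_4 => rfl
    case e'_5 => rfl
    case e'_6 => rfl
    case e'_8 => rfl
    rw [star_smul, star_mul, hK, hz]
    rw [neg_smul, neg_mul, smul_mul_assoc, mul_smul_comm, mul_assoc]
    abel
  intro s
  have := is_const_of_deriv_eq_zero (f := fun s => star (P s) * P s)
    (fun x => (hF x).differentiableAt) (fun x => (hF x).deriv) s 0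
  simpa [hP0] using this

lemma inner_bound (α : ℝ) (KA : ℝ → Mn) (B : Mn) (VA : ℝ → Mn)
    (hKAcont : Continuous KA) (hKAstar : ∀ s, star (KA s) = KA s)
    (hVA0 : VA 0 = 1)
    (hVAd : ∀ s, HasDerivAt VA ((-(Complex.I * α)) • (KA s * VA s)) s)
    (hVAu : ∀ s, star (VA s) * VA s = 1) (hVAu' : ∀ s, VA s * star (VA s) = 1)
    (v : ℝ) (hv : 0 ≤ v) :
    ‖B * VA v - VA v * B‖ ≤ |α| * ∫ s in (0:ℝ)..v, ‖KA s * B - B * KA s‖ := by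
  set F : ℝ → Mn := fun s => star (VA s) * (B * VA s) with hF
  set q : ℝ → Mn := fun s => (Complex.I * α) • (star (VA s) * ((KA s * B - B * KA s) * VA s)) with hq
  have hVAcont : Continuous VA :=
    Differentiable.continuous (fun s => (hVAd s).differentiableAt)
  have hst : star (-(Complex.I * (α:ℂ))) = Complex.I * α := by
    simp [Complex.conj_I]
  have hFd : ∀ s, HasDerivAt F (q s) s := by
    intro s
    have h := (hVAd s).star.mul ((hVAd s).const_mul B)
    convert h using 1
    case e'_4 => rfl
    case e'_5 => rfl
    case e'_6 => rfl
    case e'_8 => rfl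
    rw [star_smul, star_mul, hKAstar, hst]
    show (Complex.I * (α:ℂ)) • (star (VA s) * ((KA s * B - B * KA s) * VA s)) = _
    simp only [mul_assoc, sub_mul, mul_sub, smul_mul_assoc, mul_smul_comm]
    module
  have hqcont : Continuous q :=
    (continuous_const.fun_smul ((hVAcont.star).mul
      (((hKAcont.mul continuous_const).sub (continuous_const.mul hKAcont)).mul hVAcont)))
  have hFTC : ∫ s in (0:ℝ)..v, q s = F v - F 0 :=
    intervalIntegral.integral_eq_sub_of_hasDerivAt (fun s _ => hFd s)
      (hqcont.intervalIntegrable 0 v)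
  have hF0 : F 0 = B := by simp [hF, hVA0]
  have hkey : B * VA v - VA v * B = VA v * (F v - F 0) := by
    rw [mul_sub, hF0, hF, ← mul_assoc, hVAu' v, one_mul]
  rw [hkey, norm_unitary_mul _ _ (hVAu v), ← hFTC]
  calc ‖∫ s in (0:ℝ)..v, q s‖ ≤ ∫ s in (0:ℝ)..v, ‖q s‖ :=
        intervalIntegral.norm_integral_le_integral_norm hv
  _ = ∫ s in (0:ℝ)..v, |α| * ‖KA s * B - B * KA s‖ := by
      apply intervalIntegral.integral_congr
      intro s _
      show ‖q s‖ = _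
      rw [hq, norm_smul]
      have h1 : ‖Complex.I * (α:ℂ)‖ = |α| := by simp
      rw [h1, norm_unitary_mul _ _ (by rw [star_star]; exact hVAu' s),
        norm_mul_unitary _ _ (hVAu' s)]
  _ = |α| * ∫ s in (0:ℝ)..v, ‖KA s * B - B * KA s‖ := by
      rw [intervalIntegral.integral_const_mul]

end ThriftTD

open ThriftTD

/-- **Time-dependent first-order THRIFT error bound.**
`U`, `U₀` solve `U' = -iH U`, `U₀' = -iH₀ U₀` with `H = H₀ + α(H₁^A + H₁^B)`,
`H̃₁^X(s) = U₀(s)⁻¹ H₁^X(s) U₀(s)`, and `V_X` solves `V_X' = -iα H̃₁^X V_X`; then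
`‖U(t) - U₀(t) V_A(t) V_B(t)‖ ≤ α² ∫₀ᵗ dv ∫₀ᵛ ds ‖[H̃₁^A(s), H̃₁^B(v)]‖`. -/
theorem thrift_first_order_time_dependent {n : ℕ}
    (H₀ H₁A H₁B : ℝ → Matrix (Fin n) (Fin n) ℂ)
    (hH₀cont : Continuous H₀) (hH₁Acont : Continuous H₁A) (hH₁Bcont : Continuous H₁B)
    (hH₀herm : ∀ s, (H₀ s).IsHermitian)
    (hH₁Aherm : ∀ s, (H₁A s).IsHermitian) (hH₁Bherm : ∀ s, (H₁B s).IsHermitian)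
    (α t : ℝ) (ht : 0 ≤ t)
    (U U₀ VA VB : ℝ → Matrix (Fin n) (Fin n) ℂ)
    (hU0 : U 0 = 1) (hU₀0 : U₀ 0 = 1) (hVA0 : VA 0 = 1) (hVB0 : VB 0 = 1)
    (hU : ∀ s : ℝ,
      HasDerivAt U ((-Complex.I) • ((H₀ s + α • (H₁A s + H₁B s)) * U s)) s)
    (hU₀ : ∀ s : ℝ, HasDerivAt U₀ ((-Complex.I) • (H₀ s * U₀ s)) s)
    (hVA : ∀ s : ℝ,
      HasDerivAt VA ((-(Complex.I * α)) • (((U₀ s)⁻¹ * H₁A s * U₀ s) * VA s)) s)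
    (hVB : ∀ s : ℝ,
      HasDerivAt VB ((-(Complex.I * α)) • (((U₀ s)⁻¹ * H₁B s * U₀ s) * VB s)) s) :
    ‖U t - U₀ t * VA t * VB t‖ ≤
      α ^ 2 * ∫ v in (0:ℝ)..t, ∫ s in (0:ℝ)..v,
        ‖((U₀ s)⁻¹ * H₁A s * U₀ s) * ((U₀ v)⁻¹ * H₁B v * U₀ v) -
          ((U₀ v)⁻¹ * H₁B v * U₀ v) * ((U₀ s)⁻¹ * H₁A s * U₀ s)‖ := by
  -- star forms of hermiticity
  have hH₀s : ∀ s, star (H₀ s) = H₀ s :=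
    fun s => (Matrix.star_eq_conjTranspose _).trans (hH₀herm s)
  have hH₁As : ∀ s, star (H₁A s) = H₁A s :=
    fun s => (Matrix.star_eq_conjTranspose _).trans (hH₁Aherm s)
  have hH₁Bs : ∀ s, star (H₁B s) = H₁B s :=
    fun s => (Matrix.star_eq_conjTranspose _).trans (hH₁Bherm s)
  -- unitarity of U₀
  have hU₀unit : ∀ s, star (U₀ s) * U₀ s = 1 :=
    unitary_of_ode (-Complex.I) (by simp) H₀ U₀ hH₀s hU₀0 hU₀
  have hU₀unit' : ∀ s, U₀ s * star (U₀ s) = 1 :=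
    fun s => mul_eq_one_comm.mp (hU₀unit s)
  have hinv : ∀ s, (U₀ s)⁻¹ = star (U₀ s) := fun s => Matrix.inv_eq_left_inv (hU₀unit s)
  simp only [hinv] at hVA hVB ⊢
  set KA : ℝ → Matrix (Fin n) (Fin n) ℂ := fun s => star (U₀ s) * H₁A s * U₀ s with hKAdef
  set KB : ℝ → Matrix (Fin n) (Fin n) ℂ := fun s => star (U₀ s) * H₁B s * U₀ s with hKBdef
  have hVA' : ∀ s, HasDerivAt VA ((-(Complex.I * α)) • (KA s * VA s)) s := hVA
  have hVB' : ∀ s, HasDerivAt VB ((-(Complex.I * α)) • (KB s * VB s)) s := hVB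
  -- hermiticity and continuity of KA, KB
  have hKAs : ∀ s, star (KA s) = KA s := by
    intro s; simp [hKAdef, star_mul, hH₁As s, mul_assoc]
  have hKBs : ∀ s, star (KB s) = KB s := by
    intro s; simp [hKBdef, star_mul, hH₁Bs s, mul_assoc]
  have hU₀cont : Continuous U₀ :=
    Differentiable.continuous (fun s => (hU₀ s).differentiableAt)
  have hUcont : Continuous U :=
    Differentiable.continuous (fun s => (hU s).differentiableAt)
  have hVAcont : Continuous VA :=
    Differentiable.continuous (fun s => (hVA' s).differentiableAt)
  have hVBcont : Continuous VB :=
    Differentiable.continuous (fun s => (hVB' s).differentiableAt)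
  have hKAcont : Continuous KA := ((hU₀cont.star.mul hH₁Acont).mul hU₀cont)
  have hKBcont : Continuous KB := ((hU₀cont.star.mul hH₁Bcont).mul hU₀cont)
  -- unitarity of U, VA, VB
  have hHsum : ∀ s, star (H₀ s + α • (H₁A s + H₁B s)) = H₀ s + α • (H₁A s + H₁B s) := by
    intro s; simp [star_add, star_smul, hH₀s s, hH₁As s, hH₁Bs s]
  have hUunit : ∀ s, star (U s) * U s = 1 :=
    unitary_of_ode (-Complex.I) (by simp) _ U hHsum hU0 hU
  have hUunit' : ∀ s, U s * star (U s) = 1 :=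
    fun s => mul_eq_one_comm.mp (hUunit s)
  have hziα : star (-(Complex.I * (α:ℂ))) = -(-(Complex.I * (α:ℂ))) := by
    simp [Complex.conj_I]
  have hVAunit : ∀ s, star (VA s) * VA s = 1 :=
    unitary_of_ode (-(Complex.I * α)) hziα KA VA hKAs hVA0 hVA'
  have hVAunit' : ∀ s, VA s * star (VA s) = 1 :=
    fun s => mul_eq_one_comm.mp (hVAunit s)
  have hVBunit : ∀ s, star (VB s) * VB s = 1 :=
    unitary_of_ode (-(Complex.I * α)) hziα KB VB hKBs hVB0 hVB'
  have hVBunit' : ∀ s, VB s * star (VB s) = 1 :=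
    fun s => mul_eq_one_comm.mp (hVBunit s)
  -- intertwining identities
  have hUKA : ∀ (s : ℝ) (X : Matrix (Fin n) (Fin n) ℂ),
      U₀ s * (KA s * X) = H₁A s * (U₀ s * X) := by
    intro s X
    rw [hKAdef]
    show U₀ s * (star (U₀ s) * H₁A s * U₀ s * X) = _
    rw [← mul_assoc, ← mul_assoc, ← mul_assoc, hU₀unit' s, one_mul, mul_assoc]
  have hUKB : ∀ (s : ℝ) (X : Matrix (Fin n) (Fin n) ℂ),
      U₀ s * (KB s * X) = H₁B s * (U₀ s * X) := by
    intro s X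
    rw [hKBdef]
    show U₀ s * (star (U₀ s) * H₁B s * U₀ s * X) = _
    rw [← mul_assoc, ← mul_assoc, ← mul_assoc, hU₀unit' s, one_mul, mul_assoc]
  -- the derivative of D v = star (U v) * (U₀ v * VA v * VB v)
  set r : ℝ → Matrix (Fin n) (Fin n) ℂ := fun v =>
    (Complex.I * α) • (star (U v) * (U₀ v * ((KB v * VA v - VA v * KB v) * VB v))) with hr
  have hD : ∀ v, HasDerivAt (fun v => star (U v) * (U₀ v * VA v * VB v)) (r v) v := by
    intro v
    have h := (hU v).star.mul (((hU₀ v).mul (hVA' v)).mul (hVB' v))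
    convert h using 1
    case e'_4 => rfl
    case e'_5 => rfl
    case e'_6 => rfl
    case e'_8 => rfl
    rw [star_smul, star_mul, hHsum v]
    have hcs : ∀ (X : Matrix (Fin n) (Fin n) ℂ), α • X = (α:ℂ) • X :=
      fun X => (Complex.coe_smul α X).symm
    show (Complex.I * (α:ℂ)) • (star (U v) * (U₀ v * ((KB v * VA v - VA v * KB v) * VB v))) = _
    simp only [hcs, star_neg, Complex.star_def, Complex.conj_I, neg_neg,
      add_mul, mul_add, sub_mul, mul_sub, smul_add, smul_sub,
      smul_mul_assoc, mul_smul_comm, smul_smul, mul_assoc, Pi.mul_apply]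
    rw [hUKA, hUKB]
    module
  have hrcont : Continuous r := by
    apply continuous_const.fun_smul
    exact (hUcont.star).mul (hU₀cont.mul
      (((hKBcont.mul hVAcont).sub (hVAcont.mul hKBcont)).mul hVBcont))
  have hFTC : ∫ v in (0:ℝ)..t, r v
      = star (U t) * (U₀ t * VA t * VB t) - star (U 0) * (U₀ 0 * VA 0 * VB 0) :=
    intervalIntegral.integral_eq_sub_of_hasDerivAt (fun v _ => hD v)
      (hrcont.intervalIntegrable 0 t)
  have hD0 : star (U 0) * (U₀ 0 * VA 0 * VB 0) = 1 := by
    simp [hU0, hU₀0, hVA0, hVB0]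
  have hkey : star (U t) * (U t - U₀ t * VA t * VB t) = -(∫ v in (0:ℝ)..t, r v) := by
    rw [hFTC, hD0, mul_sub, hUunit t]
    abel
  -- inner bound function
  set g : ℝ → ℝ := fun v => ∫ s in (0:ℝ)..v, ‖KA s * KB v - KB v * KA s‖ with hg
  have hgcont : Continuous g := by
    apply intervalIntegral.continuous_parametric_intervalIntegral_of_continuous
      (f := fun v s => ‖KA s * KB v - KB v * KA s‖) _ continuous_id
    apply Continuous.norm
    exact ((hKAcont.comp continuous_snd).mul (hKBcont.comp continuous_fst)).sub
      ((hKBcont.comp continuous_fst).mul (hKAcont.comp continuous_snd))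
  have hbound : ∀ v ∈ Set.Icc (0:ℝ) t, ‖r v‖ ≤ α ^ 2 * g v := by
    intro v hv
    have h1 : ‖r v‖ = |α| * ‖KB v * VA v - VA v * KB v‖ := by
      rw [hr, norm_smul]
      have h2 : ‖Complex.I * (α:ℂ)‖ = |α| := by simp
      rw [h2, norm_unitary_mul _ _ (by rw [star_star]; exact hUunit' v),
        norm_unitary_mul _ _ (hU₀unit v), norm_mul_unitary _ _ (hVBunit' v)]
    rw [h1]
    have h3 := inner_bound α KA (KB v) VA hKAcont hKAs hVA0 hVA' hVAunit hVAunit' v hv.1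
    calc |α| * ‖KB v * VA v - VA v * KB v‖
        ≤ |α| * (|α| * ∫ s in (0:ℝ)..v, ‖KA s * KB v - KB v * KA s‖) :=
          mul_le_mul_of_nonneg_left h3 (abs_nonneg α)
    _ = α ^ 2 * g v := by rw [← mul_assoc, ← abs_mul, abs_mul_self, ← sq]
  have hEt : ‖U t - U₀ t * VA t * VB t‖ = ‖∫ v in (0:ℝ)..t, r v‖ := by
    rw [← norm_unitary_mul (star (U t)) _ (by rw [star_star]; exact hUunit' t),
      hkey, norm_neg]
  rw [hEt]
  calc ‖∫ v in (0:ℝ)..t, r v‖ ≤ ∫ v in (0:ℝ)..t, ‖r v‖ :=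
        intervalIntegral.norm_integral_le_integral_norm ht
  _ ≤ ∫ v in (0:ℝ)..t, α ^ 2 * g v := by
      apply intervalIntegral.integral_mono_on ht
        (hrcont.norm.intervalIntegrable 0 t)
        ((continuous_const.mul hgcont).intervalIntegrable 0 t) hbound
  _ = α ^ 2 * ∫ v in (0:ℝ)..t, g v := intervalIntegral.integral_const_mul _ _
end
end
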